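/- arXiv:2604.01808 — 7 statements merged into one kernel-verified Lean document; each statement's English description precedes it below -/
import Mathlib

section
/- Every very simple 2-colouring f of pairs from a finite set S has a homogeneous set of size at least √|S| (i.e., a homogeneous set H with |H|² ≥ |S|). -/
/-- Number of indices where consecutive entries of a boolean sequence differ. -/
def changes (s : List Bool) : ℕ :=
  ((s.zip s.tail).filter fun p => p.1 != p.2).length

/-- Number of maximal constant blocks of a boolean sequence. -/
def blocks (s : List Bool) : ℕ :=
  if s = [] then 0 else changes s + 1

/-- The sequence ⟨f x y : y ∈ A, y > x⟩ in increasing order of y. -/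
def seqAfter (f : ℕ → ℕ → Bool) (A : Finset ℕ) (x : ℕ) : List Bool :=
  (Finset.sort (A.filter fun y => x < y) (· ≤ ·)).map (f x)

/-- `f` is at most `k`-unstable on `A`: each sequence f(x,−) has at most k maximal constant blocks. -/
def AtMostUnstable (f : ℕ → ℕ → Bool) (A : Finset ℕ) (k : ℕ) : Prop :=
  ∀ x ∈ A, blocks (seqAfter f A x) ≤ k

/-- `H` is homogeneous for `f` with colour `b`. -/
def HomogOf (f : ℕ → ℕ → Bool) (H : Finset ℕ) (b : Bool) : Prop :=
  ∀ x ∈ H, ∀ y ∈ H, x < y → f x y = b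

/-- `H` is homogeneous for `f`. -/
def Homogeneous (f : ℕ → ℕ → Bool) (H : Finset ℕ) : Prop :=
  ∃ b, HomogOf f H b

/-- Very simple colourings (Erdős–Hajnal), as a predicate on (finite set, colouring). -/
inductive VerySimple : Finset ℕ → (ℕ → ℕ → Bool) → Prop
  | single (a : ℕ) (f : ℕ → ℕ → Bool) : VerySimple {a} f
  | join (S₁ S₂ : Finset ℕ) (f : ℕ → ℕ → Bool) (b : Bool)
      (hd : Disjoint S₁ S₂)
      (h₁ : VerySimple S₁ f) (h₂ : VerySimple S₂ f)
      (hcross : ∀ x ∈ S₁, ∀ y ∈ S₂, (x < y → f x y = b) ∧ (y < x → f y x = b)) :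
      VerySimple (S₁ ∪ S₂) f

/-- The list `s` contains a run of `k+1` equal consecutive entries. -/
def hasRunL (k : ℕ) (s : List Bool) : Prop :=
  ∃ i, i + k < s.length ∧
    ∀ a b, i ≤ a → a ≤ i + k → i ≤ b → b ≤ i + k → s.getD a false = s.getD b false

/-- The least level `e ≤ t` at which `x` and `y` lie in the same interval of length `s^e`. -/
def splitLevel (s t x y : ℕ) : ℕ :=
  (((List.range (t + 1)).find? fun e => x / s ^ e == y / s ^ e).getD t)

/-- The hierarchical colouring of `[s^t]` built from a base colouring `g` on `[s]`. -/
def hierColor (s t : ℕ) (g : ℕ → ℕ → Bool) (x y : ℕ) : Bool :=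
  g ((x / s ^ (splitLevel s t x y - 1)) % s) ((y / s ^ (splitLevel s t x y - 1)) % s)


lemma homog_union {f : ℕ → ℕ → Bool} {b : Bool} {S₁ S₂ A B : Finset ℕ}
    (hA : A ⊆ S₁) (hB : B ⊆ S₂)
    (hAh : HomogOf f A b) (hBh : HomogOf f B b)
    (hcross : ∀ x ∈ S₁, ∀ y ∈ S₂, (x < y → f x y = b) ∧ (y < x → f y x = b)) :
    HomogOf f (A ∪ B) b := by
  intro x hx y hy hxy
  rcases Finset.mem_union.1 hx with hx | hx <;> rcases Finset.mem_union.1 hy with hy | hy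
  · exact hAh x hx y hy hxy
  · exact (hcross x (hA hx) y (hB hy)).1 hxy
  · exact (hcross y (hA hy) x (hB hx)).2 hxy
  · exact hBh x hx y hy hxy

lemma vs_aux (S : Finset ℕ) (f : ℕ → ℕ → Bool) (h : VerySimple S f) :
    ∃ H₀ ⊆ S, ∃ H₁ ⊆ S, HomogOf f H₀ false ∧ HomogOf f H₁ true ∧
      S.card ≤ H₀.card * H₁.card := by
  induction h with
  | single a f =>
      refine ⟨{a}, subset_rfl, {a}, subset_rfl, ?_, ?_, by simp⟩ <;>
        · intro x hx y hy hxy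
          simp only [Finset.mem_singleton] at hx hy
          omega
  | join S₁ S₂ f b hd h₁ h₂ hcross ih₁ ih₂ =>
      obtain ⟨A₀, hA₀, A₁, hA₁, hA₀h, hA₁h, hA⟩ := ih₁
      obtain ⟨B₀, hB₀, B₁, hB₁, hB₀h, hB₁h, hB⟩ := ih₂
      have hcard : (S₁ ∪ S₂).card = S₁.card + S₂.card :=
        Finset.card_union_of_disjoint hd
      cases b with
      | false =>
          have hdAB : Disjoint A₀ B₀ := hd.mono hA₀ hB₀
          have hU : (A₀ ∪ B₀).card = A₀.card + B₀.card :=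
            Finset.card_union_of_disjoint hdAB
          refine ⟨A₀ ∪ B₀, Finset.union_subset_union hA₀ hB₀,
            if A₁.card ≤ B₁.card then B₁ else A₁, ?_,
            homog_union hA₀ hB₀ hA₀h hB₀h hcross, ?_, ?_⟩
          · split
            · exact hB₁.trans Finset.subset_union_right
            · exact hA₁.trans Finset.subset_union_left
          · split
            · exact hB₁h
            · exact hA₁h
          · rw [hcard, hU]
            split <;> rename_i hle
            · calc S₁.card + S₂.card ≤ A₀.card * A₁.card + B₀.card * B₁.card :=
                    Nat.add_le_add hA hB
                _ ≤ A₀.card * B₁.card + B₀.card * B₁.card :=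
                    Nat.add_le_add_right (Nat.mul_le_mul_left _ hle) _
                _ = (A₀.card + B₀.card) * B₁.card := (Nat.add_mul _ _ _).symm
            · calc S₁.card + S₂.card ≤ A₀.card * A₁.card + B₀.card * B₁.card :=
                    Nat.add_le_add hA hB
                _ ≤ A₀.card * A₁.card + B₀.card * A₁.card :=
                    Nat.add_le_add_left (Nat.mul_le_mul_left _ (by omega)) _
                _ = (A₀.card + B₀.card) * A₁.card := (Nat.add_mul _ _ _).symm
      | true =>
          have hdAB : Disjoint A₁ B₁ := hd.mono hA₁ hB₁
          have hU : (A₁ ∪ B₁).card = A₁.card + B₁.card :=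
            Finset.card_union_of_disjoint hdAB
          refine ⟨if A₀.card ≤ B₀.card then B₀ else A₀, ?_,
            A₁ ∪ B₁, Finset.union_subset_union hA₁ hB₁, ?_,
            homog_union hA₁ hB₁ hA₁h hB₁h hcross, ?_⟩
          · split
            · exact hB₀.trans Finset.subset_union_right
            · exact hA₀.trans Finset.subset_union_left
          · split
            · exact hB₀h
            · exact hA₀h
          · rw [hcard, hU]
            split <;> rename_i hle
            · calc S₁.card + S₂.card ≤ A₀.card * A₁.card + B₀.card * B₁.card :=
                    Nat.add_le_add hA hB
                _ ≤ B₀.card * A₁.card + B₀.card * B₁.card :=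
                    Nat.add_le_add_right (Nat.mul_le_mul_right _ hle) _
                _ = B₀.card * (A₁.card + B₁.card) := (Nat.mul_add _ _ _).symm
            · calc S₁.card + S₂.card ≤ A₀.card * A₁.card + B₀.card * B₁.card :=
                    Nat.add_le_add hA hB
                _ ≤ A₀.card * A₁.card + A₀.card * B₁.card :=
                    Nat.add_le_add_left (Nat.mul_le_mul_right _ (by omega)) _
                _ = A₀.card * (A₁.card + B₁.card) := (Nat.mul_add _ _ _).symm

theorem stmt2 (S : Finset ℕ) (f : ℕ → ℕ → Bool) (h : VerySimple S f) :
    ∃ H ⊆ S, Homogeneous f H ∧ S.card ≤ H.card ^ 2 := by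
  obtain ⟨H₀, hH₀, H₁, hH₁, h₀, h₁, hle⟩ := vs_aux S f h
  by_cases hc : H₀.card ≤ H₁.card
  · exact ⟨H₁, hH₁, ⟨true, h₁⟩, by nlinarith [hle]⟩
  · exact ⟨H₀, hH₀, ⟨false, h₀⟩, by nlinarith [hle]⟩
end

section
/- There exists a constant C such that for all c ≥ 2 and all k ≥ C the following holds: if A ⊆ ℕ is a finite set with |A| = k^c and f : [A]² → 2 is at most k-unstable, then there exist subsets A₀, A₁ ⊆ A with max A₀ < min A₁, |A₀| = |A₁| = k^{c−2}, and f constant on all pairs (x,y) with x ∈ A₀ and y ∈ A₁. -/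
lemma changes_le_cons (a : Bool) (l : List Bool) : changes l ≤ changes (a :: l) := by
  cases l with
  | nil => simp [changes]
  | cons b l =>
    simp only [changes, List.tail_cons, List.zip_cons_cons, List.filter_cons]
    split <;> simp

lemma changes_suffix (u v : List Bool) : changes v ≤ changes (u ++ v) := by
  induction u with
  | nil => simp
  | cons a u ih => exact ih.trans (changes_le_cons a (u ++ v))

lemma zip_tail_eq (s : List Bool) :
    s.zip s.tail = (List.range (s.length - 1)).map
      (fun p => (s.getD p false, s.getD (p+1) false)) := by
  apply List.ext_getElem
  · simp only [List.length_zip, List.length_tail, List.length_map, List.length_range]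
    omega
  · intro i h1 h2
    have hl : i < s.length - 1 := by simpa using h2
    have h3 : i < s.length := by omega
    have h4 : i + 1 < s.length := by omega
    rw [List.getElem_zip, List.getElem_map, List.getElem_range, List.getElem_tail]
    simp [List.getD_eq_getElem, h3, h4]

lemma changes_eq_countP (s : List Bool) :
    changes s = (List.range (s.length - 1)).countP
      (fun p => s.getD p false != s.getD (p+1) false) := by
  rw [changes, zip_tail_eq, ← List.countP_eq_length_filter, List.countP_map]
  rfl

lemma countP_range_eq_card (n : ℕ) (q : ℕ → Bool) :
    (List.range n).countP q = ((Finset.range n).filter (fun p => q p = true)).card := by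
  simp [Finset.filter, Finset.range, Multiset.range, List.countP_eq_length_filter,
    Multiset.filter_coe]

lemma const_of_no_change (s : List Bool) (a : ℕ) (t : ℕ)
    (h : ∀ p, a ≤ p → p < a + t → s.getD p false = s.getD (p+1) false) :
    ∀ j ≤ t, s.getD (a + j) false = s.getD a false := by
  intro j hj
  induction j with
  | zero => rfl
  | succ j ih =>
    have h1 := h (a + j) (by omega) (by omega)
    rw [show a + (j+1) = (a+j)+1 by ring, ← h1, ih (by omega)]

lemma good_interval (s : List Bool) (k t : ℕ) (ht : 0 < t) (hk : 0 < k)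
    (hlen : s.length = k * t) (hch : changes s ≤ k - 1) :
    ∃ i < k, ∀ j < t, s.getD (i*t + j) false = s.getD (i*t) false := by
  classical
  set D : Finset ℕ := (Finset.range (s.length - 1)).filter
      (fun p => (s.getD p false != s.getD (p+1) false) = true) with hD
  have hcard : D.card = changes s := by
    rw [changes_eq_countP, countP_range_eq_card]
  have himg : (D.image (· / t)).card < (Finset.range k).card := by
    have := Finset.card_image_le (s := D) (f := (· / t))
    simp only [Finset.card_range]
    omega
  have hex : ∃ i ∈ Finset.range k, i ∉ D.image (· / t) := by
    by_contra hcon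
    push_neg at hcon
    exact absurd (Finset.card_le_card fun x hx => hcon x hx) (by omega)
  obtain ⟨i, hik, hinot⟩ := hex
  rw [Finset.mem_range] at hik
  refine ⟨i, hik, fun j hj => ?_⟩
  refine const_of_no_change s (i*t) (t-1) ?_ j (by omega)
  intro p hp1 hp2
  by_contra hne
  apply hinot
  refine Finset.mem_image.2 ⟨p, ?_, ?_⟩
  all_goals have h5 : (i+1) * t = i*t + t := by ring
  all_goals have h6 : (i+1) * t ≤ k * t := Nat.mul_le_mul_right _ (by omega)
  · exact Finset.mem_filter.2 ⟨Finset.mem_range.2 (by omega), by simpa using hne⟩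
  · exact Nat.div_eq_of_lt_le hp1 (by omega)

lemma sort_filter_gt (A : Finset ℕ) (p : ℕ)
    (hp : p < (Finset.sort A (· ≤ ·)).length) :
    Finset.sort (A.filter fun y => (Finset.sort A (· ≤ ·))[p] < y) (· ≤ ·)
      = (Finset.sort A (· ≤ ·)).drop (p+1) := by
  set L := Finset.sort A (· ≤ ·) with hL
  have hs : L.Pairwise (· < ·) := (Finset.sortedLT_sort A).pairwise
  have hmono : StrictMono L.get := hs.sortedLT.strictMono_get
  have hnd : L.Nodup := Finset.sort_nodup A _
  refine (fun h1 h2 h3 => List.Perm.eq_of_pairwise' (r := (· ≤ ·)) h2 h3 h1) ?_ ?_ ?_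
  · rw [List.perm_ext_iff_of_nodup (Finset.sort_nodup _ _)
      (hnd.sublist (List.drop_sublist _ _))]
    intro y
    simp only [Finset.mem_sort, Finset.mem_filter]
    constructor
    · rintro ⟨hyA, hxy⟩
      have hyL : y ∈ L := (Finset.mem_sort _).2 hyA
      obtain ⟨q, hq, rfl⟩ := List.getElem_of_mem hyL
      have hpq : p < q := by
        by_contra hle
        push_neg at hle
        rcases eq_or_lt_of_le hle with h | h
        · exact absurd hxy (by simp [h, hL])
        · exact absurd hxy (not_lt.2 (hmono.monotone (show (⟨q,hq⟩ : Fin _) ≤ ⟨p,hp⟩ from h.le)))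
      have hq' : q - (p+1) < (L.drop (p+1)).length := by
        rw [List.length_drop]; omega
      have heq : (L.drop (p+1))[q - (p+1)] = L[q] := by
        rw [List.getElem_drop]
        congr 1
        omega
      exact heq ▸ List.getElem_mem hq'
    · intro hy
      obtain ⟨j, hj, rfl⟩ := List.getElem_of_mem hy
      rw [List.getElem_drop]
      have hlt : p + 1 + j < L.length := by
        have := hj; rw [List.length_drop] at this; omega
      refine ⟨(Finset.mem_sort _).1 (List.getElem_mem hlt), ?_⟩
      exact hmono (show (⟨p,hp⟩ : Fin _) < ⟨p+1+j, hlt⟩ by simp; omega)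
  · exact (Finset.pairwise_sort _ _)
  · exact List.Pairwise.sublist (List.drop_sublist _ _) (Finset.pairwise_sort _ _)

lemma changes_map_drop (g : ℕ → Bool) (l : List ℕ) (e : ℕ) :
    changes ((l.drop e).map g) ≤ changes (l.map g) := by
  conv_rhs => rw [← List.take_append_drop e l]
  rw [List.map_append]
  exact changes_suffix _ _


theorem stmt4 : ∃ C : ℕ, ∀ c k : ℕ, 2 ≤ c → C ≤ k →
    ∀ A : Finset ℕ, A.card = k ^ c →
    ∀ f : ℕ → ℕ → Bool, AtMostUnstable f A k →
    ∃ A₀ ⊆ A, ∃ A₁ ⊆ A,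
      (∀ x ∈ A₀, ∀ y ∈ A₁, x < y) ∧
      A₀.card = k ^ (c - 2) ∧ A₁.card = k ^ (c - 2) ∧
      ∃ b : Bool, ∀ x ∈ A₀, ∀ y ∈ A₁, f x y = b := by

  classical
  refine ⟨3, fun c k hc hk A hA f hf => ?_⟩
  set t := k ^ (c - 2) with htdef
  set n := k ^ c with hndef
  set m := k ^ (c - 1) with hmdef
  have hkpos : 0 < k := by omega
  have htpos : 0 < t := pow_pos hkpos _
  have hmkt : m = k * t := by
    rw [hmdef, htdef, ← pow_succ']
    congr 1
    omega
  have hnk2 : n = t * (k * k) := by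
    rw [hndef, htdef, show k * k = k ^ 2 by ring, ← pow_add]
    congr 1
    omega
  have hmn : m ≤ n := by
    have : k * t ≤ t * (k * k) := by nlinarith
    omega
  set d := n - m with hddef
  set L := Finset.sort A (· ≤ ·) with hLdef
  have hLlen : L.length = n := by rw [hLdef, Finset.length_sort, hA]
  have hs : L.Pairwise (· < ·) := (Finset.sortedLT_sort A).pairwise
  have hmono : StrictMono L.get := hs.sortedLT.strictMono_get
  have hnd : L.Nodup := Finset.sort_nodup A _
  set T := L.drop d with hTdef
  have hTlen : T.length = m := by
    rw [hTdef, List.length_drop, hLlen]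
    omega
  have hmpos : 0 < m := pow_pos hkpos _
  have hdn : d < n := by omega
  -- the property each bottom element satisfies
  set P : ℕ → ℕ → Prop := fun x i => i < k ∧
    ∀ j < t, (T.map (f x)).getD (i*t+j) false = (T.map (f x)).getD (i*t) false with hPdef
  set B : Finset ℕ := (L.take d).toFinset with hBdef
  have hBcard : B.card = d := by
    rw [hBdef, List.toFinset_card_of_nodup (hnd.sublist (List.take_sublist _ _)),
      List.length_take, hLlen]
    omega
  have hBA : ∀ x ∈ B, x ∈ A := by
    intro x hx
    rw [hBdef, List.mem_toFinset] at hx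
    exact (Finset.mem_sort _).1 ((List.take_sublist _ _).mem hx)
  have hBP : ∀ x ∈ B, ∃ i, P x i := by
    intro x hx
    rw [hBdef, List.mem_toFinset] at hx
    obtain ⟨p, hplt, hpx⟩ := List.getElem_of_mem hx
    rw [List.getElem_take] at hpx
    have hpd : p < d := by
      have := hplt
      rw [List.length_take] at this
      omega
    have hpn : p < L.length := by omega
    -- changes bound
    have hsf : Finset.sort (A.filter fun y => L[p] < y) (· ≤ ·) = L.drop (p+1) :=
      sort_filter_gt A p hpn
    have hseq : seqAfter f A x = (L.drop (p+1)).map (f x) := by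
      rw [seqAfter, ← hpx, hsf]
    have hch : changes (T.map (f x)) ≤ k - 1 := by
      have hsub : T = (L.drop (p+1)).drop (d - (p+1)) := by
        rw [hTdef, List.drop_drop]
        congr 1
        omega
      have h1 : changes (T.map (f x)) ≤ changes ((L.drop (p+1)).map (f x)) := by
        rw [hsub]
        exact changes_map_drop _ _ _
      have h2 : blocks (seqAfter f A x) ≤ k := hf x (hBA x (by rw [hBdef]; exact List.mem_toFinset.2 hx))
      have hne : seqAfter f A x ≠ [] := by
        rw [hseq, ← List.length_pos_iff, List.length_map, List.length_drop, hLlen]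
        omega
      rw [blocks, if_neg hne, hseq] at h2
      omega
    obtain ⟨i, hik, hconst⟩ := good_interval (T.map (f x)) k t htpos hkpos
      (by rw [List.length_map, hTlen, hmkt]) hch
    exact ⟨i, hik, hconst⟩
  -- choice function
  set g : ℕ → ℕ × Bool := fun x =>
    if h : ∃ i, P x i then (h.choose, (T.map (f x)).getD (h.choose * t) false)
    else (0, false) with hgdef
  have hgmem : ∀ x ∈ B, g x ∈ Finset.range k ×ˢ (Finset.univ : Finset Bool) := by
    intro x hx
    have h := hBP x hx
    simp only [hgdef]
    rw [dif_pos h]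
    exact Finset.mem_product.2 ⟨Finset.mem_range.2 h.choose_spec.1, Finset.mem_univ _⟩
  have hcard2 : (Finset.range k ×ˢ (Finset.univ : Finset Bool)).card * t ≤ B.card := by
    rw [Finset.card_product, Finset.card_range, Finset.card_univ, Fintype.card_bool, hBcard]
    have h3 : 3 * (k * t) ≤ k * (k * t) := Nat.mul_le_mul_right _ hk
    have key : k * 2 * t + m ≤ n := by
      rw [hmkt, hnk2]; nlinarith [h3]
    exact Nat.le_sub_of_add_le key
  obtain ⟨⟨i, b⟩, hib, hfib⟩ := Finset.exists_le_card_fiber_of_mul_le_card_of_maps_to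
    hgmem ⟨(0, false), Finset.mem_product.2 ⟨Finset.mem_range.2 hkpos, Finset.mem_univ _⟩⟩ hcard2
  have hik : i < k := Finset.mem_range.1 (Finset.mem_product.1 hib).1
  obtain ⟨A₀, hA₀fib, hA₀card⟩ := Finset.exists_subset_card_eq hfib
  have hA₀B : A₀ ⊆ B := hA₀fib.trans (Finset.filter_subset _ _)
  set I : List ℕ := (T.drop (i*t)).take t with hIdef
  have hIsub : I.Sublist L := ((List.take_sublist _ _).trans (List.drop_sublist _ _)).trans
    (List.drop_sublist _ _)
  have hitm : i * t + t ≤ m := by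
    rw [hmkt]
    calc i * t + t = (i+1) * t := by ring
    _ ≤ k * t := Nat.mul_le_mul_right _ (by omega)
  have hIlen : I.length = t := by
    rw [hIdef, List.length_take, List.length_drop, hTlen]
    omega
  set A₁ : Finset ℕ := I.toFinset with hA₁def
  have hA₁card : A₁.card = t := by
    rw [hA₁def, List.toFinset_card_of_nodup (hnd.sublist hIsub), hIlen]
  -- membership of elements of A₁ as getElem of T
  have hA₁elem : ∀ y ∈ A₁, ∃ q < t, ∃ (hq : i*t+q < T.length), y = T[i*t+q] := by
    intro y hy
    rw [hA₁def, List.mem_toFinset, hIdef] at hy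
    obtain ⟨q, hqlt, rfl⟩ := List.getElem_of_mem hy
    have hqt : q < t := by
      have := hqlt
      rw [List.length_take] at this
      omega
    have hq2 : i*t+q < T.length := by omega
    refine ⟨q, hqt, hq2, ?_⟩
    rw [List.getElem_take, List.getElem_drop]
  refine ⟨A₀, fun x hx => hBA x (hA₀B hx), A₁, ?_, ?_, hA₀card, hA₁card, b, ?_⟩
  · intro y hy
    rw [hA₁def, List.mem_toFinset] at hy
    exact (Finset.mem_sort _).1 (hIsub.mem hy)
  · -- ordering
    intro x hx y hy
    obtain ⟨q, hqt, hq2, hyq⟩ := hA₁elem y hy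
    have hxB := hA₀B hx
    rw [hBdef, List.mem_toFinset] at hxB
    obtain ⟨p, hplt, hpx⟩ := List.getElem_of_mem hxB
    have hpd : p < d := by
      have := hplt
      rw [List.length_take, hLlen] at this
      omega
    rw [List.getElem_take] at hpx
    have hyL : y = L[d + (i*t+q)]'(by rw [hLlen]; omega) := by
      rw [hyq]; exact List.getElem_drop
    rw [← hpx, hyL]
    exact hmono (show (⟨p, by omega⟩ : Fin L.length) < ⟨d + (i*t+q), by rw[hLlen]; omega⟩
      from by simp; omega)
  · -- colour
    intro x hx y hy
    have hxfib := hA₀fib hx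
    rw [Finset.mem_filter] at hxfib
    obtain ⟨hxB, hgx⟩ := hxfib
    have hex := hBP x hxB
    rw [hgdef] at hgx
    simp only [dif_pos hex, Prod.mk.injEq] at hgx
    obtain ⟨hchoose, hb⟩ := hgx
    have hspec := hex.choose_spec.2
    rw [hchoose] at hspec
    obtain ⟨q, hqt, hq2, hyq⟩ := hA₁elem y hy
    have hfy : f x y = (T.map (f x)).getD (i*t+q) false := by
      rw [List.getD_eq_getElem _ _ (by rw [List.length_map]; omega), List.getElem_map, hyq]
    rw [hfy, hspec q hqt, ← hchoose, hb]
end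

section
/- There exists a constant C such that for all d ≥ 1 and all k ≥ C: every 2-colouring f of pairs from {0,...,k^{2d}−1} that is at most k-unstable has a homogeneous set H with |H| ≥ 2^{d/2} (i.e., |H|² ≥ 2^d). -/
lemma changes_cons_cons (x y : Bool) (r : List Bool) :
    changes (x :: y :: r) = (if x = y then 0 else 1) + changes (y :: r) := by
  simp only [changes, List.tail_cons, List.zip_cons_cons, List.filter_cons]
  by_cases h : x = y <;> simp [h, Nat.add_comm]

lemma changes_map_range' (g : ℕ → Bool) :
    ∀ n a, changes ((List.range' a n).map g)
      = ((Finset.Ico a (a + n - 1)).filter (fun y => g y ≠ g (y+1))).card := by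
  intro n
  induction n with
  | zero => intro a; simp [changes]
  | succ n ih =>
    intro a
    cases n with
    | zero => simp [changes]
    | succ n =>
      have e1 : (List.range' a (n+1+1)).map g
          = g a :: (List.range' (a+1) (n+1)).map g := by
        rw [List.range'_succ, List.map_cons]
      have e2 : (List.range' (a+1) (n+1)).map g
          = g (a+1) :: (List.range' (a+1+1) n).map g := by
        rw [List.range'_succ, List.map_cons]
      rw [e1, e2, changes_cons_cons, ← e2, ih (a+1)]
      have h1 : a + (n + 1 + 1) - 1 = a + n + 1 := by omega
      have h2 : a + 1 + (n + 1) - 1 = a + n + 1 := by omega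
      rw [h1, h2]
      have h3 : Finset.Ico a (a + n + 1) = insert a (Finset.Ico (a+1) (a+n+1)) := by
        ext w; simp [Finset.mem_Ico, Finset.mem_insert]; omega
      rw [h3, Finset.filter_insert]
      by_cases h : g a = g (a + 1)
      · simp [h]
      · rw [if_pos h, Finset.card_insert_of_notMem (by simp [Finset.mem_Ico]), if_neg h]
        omega

lemma sort_Ico (a b : ℕ) :
    Finset.sort (Finset.Ico a b) (· ≤ ·) = List.range' a (b - a) := by
  refine List.Perm.eq_of_pairwise' (Finset.pairwise_sort _ _)
    (List.Pairwise.imp (fun h => le_of_lt h) (List.pairwise_lt_range' _)) ?_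
  refine (Finset.sort_perm_toList _ _).trans ?_
  rw [Nat.Ico_eq_range']
  exact Multiset.coe_eq_coe.mp (Multiset.coe_toList _)

lemma filter_gt_range (m x : ℕ) :
    (Finset.range m).filter (fun y => x < y) = Finset.Ico (x+1) m := by
  ext y; simp [Finset.mem_Ico]; omega

def Chm (m : ℕ) (f : ℕ → ℕ → Bool) (x : ℕ) : Finset ℕ :=
  (Finset.Ico (x+1) (m-1)).filter (fun y => f x y ≠ f x (y+1))

lemma Chm_card (m k : ℕ) (f : ℕ → ℕ → Bool)
    (hu : AtMostUnstable f (Finset.range m) k) (x : ℕ) :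
    (Chm m f x).card ≤ k := by
  by_cases hx : x + 1 < m
  · have hxm : x ∈ Finset.range m := by simp; omega
    have h := hu x hxm
    rw [seqAfter, filter_gt_range, sort_Ico] at h
    have hne : (List.range' (x+1) (m - (x+1))).map (f x) ≠ [] := by
      simp [List.range'_eq_nil_iff]; omega
    rw [blocks, if_neg hne, changes_map_range' (f x) (m - (x+1)) (x+1)] at h
    have : x + 1 + (m - (x+1)) - 1 = m - 1 := by omega
    rw [this] at h
    unfold Chm
    omega
  · have : Finset.Ico (x+1) (m-1) = ∅ := by
      apply Finset.Ico_eq_empty; omega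
    rw [Chm, this, Finset.filter_empty]; simp

lemma Chm_const (m : ℕ) (f : ℕ → ℕ → Bool) (x y z : ℕ)
    (hxy : x < y) (hyz : y ≤ z) (hzm : z < m)
    (hno : ∀ w, y ≤ w → w < z → w ∉ Chm m f x) : f x y = f x z := by
  induction z, hyz using Nat.le_induction with
  | base => rfl
  | succ z hyz ih =>
    have hz : f x y = f x z := ih (by omega) (fun w h1 h2 => hno w h1 (by omega))
    rw [hz]
    have hzc := hno z hyz (by omega)
    by_contra hne
    exact hzc (by
      unfold Chm
      rw [Finset.mem_filter, Finset.mem_Ico]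
      exact ⟨⟨by omega, by omega⟩, hne⟩)

-- blocks of a sorted list

def blk (l : List ℕ) (q t : ℕ) : Finset ℕ := ((l.drop (q*t)).take q).toFinset

lemma blk_subset {l : List ℕ} {q t : ℕ} {x : ℕ} (h : x ∈ blk l q t) : x ∈ l := by
  have := List.mem_toFinset.mp h
  exact List.mem_of_mem_drop (List.mem_of_mem_take this)

lemma blk_card {l : List ℕ} (hn : l.Nodup) {q t : ℕ} (h : q*(t+1) ≤ l.length) :
    (blk l q t).card = q := by
  have hsub : ((l.drop (q*t)).take q).Sublist l :=
    (List.take_sublist _ _).trans (List.drop_sublist _ _)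
  rw [blk, List.toFinset_card_of_nodup (hsub.nodup hn)]
  rw [List.length_take, List.length_drop]
  have : q * (t+1) = q * t + q := by ring
  omega

lemma sorted_getElem_le {l : List ℕ} (hs : l.Pairwise (· < ·)) {i j : ℕ}
    (hij : i ≤ j) (hj : j < l.length) : l[i]'(by omega) ≤ l[j] := by
  rcases Nat.lt_or_ge i j with h | h
  · exact le_of_lt (List.pairwise_iff_getElem.mp hs i j (by omega) hj h)
  · have : i = j := by omega
    subst this; rfl

lemma blk_index {l : List ℕ} {q t x : ℕ} (h : x ∈ blk l q t) :
    ∃ i, i < q ∧ ∃ (hl : q*t + i < l.length), l[q*t+i] = x := by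
  have hm := List.mem_toFinset.mp h
  obtain ⟨i, hi, hget⟩ := List.mem_iff_getElem.mp hm
  rw [List.length_take, List.length_drop] at hi
  have hl : q*t + i < l.length := by omega
  refine ⟨i, by omega, hl, ?_⟩
  rw [List.getElem_take, List.getElem_drop] at hget
  exact hget

lemma blk_lt {l : List ℕ} (hs : l.Pairwise (· < ·)) {q s t x y : ℕ} (hst : s < t)
    (hx : x ∈ blk l q s) (hy : y ∈ blk l q t) : x < y := by
  obtain ⟨i, hi, hil, hgi⟩ := blk_index hx
  obtain ⟨j, hj, hjl, hgj⟩ := blk_index hy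
  rw [← hgi, ← hgj]
  have hlt : q*s + i < q*t + j := by nlinarith
  exact List.pairwise_iff_getElem.mp hs _ _ (by omega) hjl hlt

lemma blk_getD_mem {l : List ℕ} {q t i : ℕ} (hi : i < q) (hl : q*(t+1) ≤ l.length) :
    l.getD (q*t+i) 0 ∈ blk l q t := by
  have hlen : q*t + i < l.length := by nlinarith
  rw [List.getD_eq_getElem _ _ hlen]
  apply List.mem_toFinset.mpr
  have h3 : i < ((l.drop (q*t)).take q).length := by
    rw [List.length_take, List.length_drop]; omega
  have e : ((l.drop (q*t)).take q)[i] = l[q*t+i] := by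
    rw [List.getElem_take, List.getElem_drop]
  rw [← e]
  exact List.getElem_mem h3

lemma blk_min_le {l : List ℕ} (hs : l.Pairwise (· < ·)) {q t y : ℕ}
    (hy : y ∈ blk l q t) : l.getD (q*t) 0 ≤ y := by
  obtain ⟨j, hj, hjl, hgj⟩ := blk_index hy
  rw [List.getD_eq_getElem _ _ (by omega), ← hgj]
  exact sorted_getElem_le hs (by omega) hjl

lemma blk_le_max {l : List ℕ} (hs : l.Pairwise (· < ·)) {q t y : ℕ} (hq : 1 ≤ q)
    (hl : q*(t+1) ≤ l.length) (hy : y ∈ blk l q t) : y ≤ l.getD (q*t+(q-1)) 0 := by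
  obtain ⟨j, hj, hjl, hgj⟩ := blk_index hy
  have hq1 : q * (t+1) = q*t + q := by ring
  have hlen : q*t + (q-1) < l.length := by omega
  rw [List.getD_eq_getElem _ _ hlen, ← hgj]
  exact sorted_getElem_le hs (by omega) hlen

lemma homog_singleton (f : ℕ → ℕ → Bool) (a : ℕ) (b : Bool) :
    HomogOf f {a} b := by
  intro x hx y hy hxy
  rw [Finset.mem_singleton] at hx hy
  omega

lemma homog_union_s5 {f : ℕ → ℕ → Bool} {b : Bool} {P Q H K : Finset ℕ}
    (hH : H ⊆ P) (hK : K ⊆ Q)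
    (hlt : ∀ x ∈ P, ∀ y ∈ Q, x < y) (hcross : ∀ x ∈ P, ∀ y ∈ Q, f x y = b)
    (h1 : HomogOf f H b) (h2 : HomogOf f K b) :
    HomogOf f (H ∪ K) b ∧ (H ∪ K).card = H.card + K.card := by
  constructor
  · intro x hx y hy hxy
    rcases Finset.mem_union.mp hx with hx | hx <;>
      rcases Finset.mem_union.mp hy with hy | hy
    · exact h1 x hx y hy hxy
    · exact hcross x (hH hx) y (hK hy)
    · exact absurd (hlt y (hH hy) x (hK hx)) (by omega)
    · exact h2 x hx y hy hxy
  · apply Finset.card_union_of_disjoint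
    rw [Finset.disjoint_left]
    intro x hx hx'
    exact absurd (hlt x (hH hx) x (hK hx')) (by omega)

lemma key (m k : ℕ) (f : ℕ → ℕ → Bool) (Ch : ℕ → Finset ℕ) (hk : 1 ≤ k)
    (hCard : ∀ x, (Ch x).card ≤ k)
    (hConst : ∀ x y z, x < y → y ≤ z → z < m →
      (∀ w, y ≤ w → w < z → w ∉ Ch x) → f x y = f x z) :
    ∀ j (A : Finset ℕ), A ⊆ Finset.range m → (12*k)^j ≤ A.card →
    ∃ H₀ H₁ : Finset ℕ, H₀ ⊆ A ∧ H₁ ⊆ A ∧ HomogOf f H₀ false ∧ HomogOf f H₁ true ∧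
      2^j ≤ H₀.card * H₁.card := by
  intro j
  induction j with
  | zero =>
    intro A _ hA
    simp only [pow_zero] at hA
    obtain ⟨a, ha⟩ := Finset.card_pos.mp hA
    exact ⟨{a}, {a}, Finset.singleton_subset_iff.mpr ha,
      Finset.singleton_subset_iff.mpr ha, homog_singleton f a false,
      homog_singleton f a true, by simp⟩
  | succ j ih =>
    intro A hAm hA
    set M := (12*k)^j with hM
    have hM1 : 1 ≤ M := Nat.one_le_pow _ _ (by omega)
    set q := 4*M with hq
    set l := A.sort (· ≤ ·) with hl
    have hlen : l.length = A.card := Finset.length_sort _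
    have hcard : 12*k*M ≤ A.card := by
      have : (12*k)^(j+1) = 12*k*M := by rw [pow_succ]; ring
      omega
    have hsorted : l.Pairwise (· < ·) := (Finset.sortedLT_sort A).pairwise
    have hnodup : l.Nodup := Finset.sort_nodup _ _
    have hql : ∀ t, t < 3*k → q*(t+1) ≤ l.length := by
      intro t ht
      calc q*(t+1) ≤ q*(3*k) := Nat.mul_le_mul_left _ (by omega)
        _ = 12*k*M := by rw [hq]; ring
        _ ≤ l.length := by omega
    -- blocks
    set B : ℕ → Finset ℕ := fun t => blk l q t with hB
    have hBsub : ∀ t, B t ⊆ A := by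
      intro t x hx
      exact (Finset.mem_sort _).mp (blk_subset hx)
    have hBcard : ∀ t, t < 3*k → (B t).card = q := fun t ht =>
      blk_card hnodup (hql t ht)
    set av : ℕ → ℕ := fun t => l.getD (q*t) 0 with hav
    set zv : ℕ → ℕ := fun t => l.getD (q*t+(q-1)) 0 with hzv
    have hav_mem : ∀ t, t < 3*k → av t ∈ B t := by
      intro t ht
      have h0 := blk_getD_mem (l := l) (t := t) (i := 0) (by omega) (hql t ht)
      rw [Nat.add_zero] at h0
      exact h0
    have hzv_mem : ∀ t, t < 3*k → zv t ∈ B t := by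
      intro t ht
      exact blk_getD_mem (l := l) (t := t) (i := q-1) (by omega) (hql t ht)
    set I : ℕ → Finset ℕ := fun t => Finset.Ico (av t) (zv t) with hI
    have hzav : ∀ s t, s < t → t < 3*k → zv s < av t := by
      intro s t hst ht
      exact blk_lt hsorted hst (hzv_mem s (by omega)) (hav_mem t ht)
    -- the bad-count function
    have hbadT : ∀ x, ((Finset.Ico 1 (2*k+1)).filter
        (fun t => ((Ch x) ∩ I t).Nonempty)).card ≤ k := by
      intro x
      refine le_trans (Finset.card_le_card_of_injOn
        (fun t => if h : ((Ch x) ∩ I t).Nonempty then ((Ch x) ∩ I t).min' h else 0)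
        ?_ ?_) (hCard x)
      · intro t ht
        rw [Finset.mem_coe, Finset.mem_filter] at ht
        dsimp only
        rw [dif_pos ht.2]
        exact Finset.mem_of_mem_inter_left (Finset.min'_mem _ ht.2)
      · intro t1 ht1 t2 ht2 heq
        rw [Finset.mem_coe, Finset.mem_filter, Finset.mem_Ico] at ht1 ht2
        by_contra hne
        dsimp only at heq
        rw [dif_pos ht1.2, dif_pos ht2.2] at heq
        have m1 := Finset.mem_of_mem_inter_right (Finset.min'_mem _ ht1.2)
        have m2 := Finset.mem_of_mem_inter_right (Finset.min'_mem _ ht2.2)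
        rw [heq] at m1
        have b1 := Finset.mem_Ico.mp m1
        have b2 := Finset.mem_Ico.mp m2
        rcases Nat.lt_or_ge t1 t2 with h | h
        · have := hzav t1 t2 h (by omega)
          omega
        · have ht : t2 < t1 := by omega
          have := hzav t2 t1 ht (by omega)
          omega
    -- find a good target block t₀
    have hex : ∃ t₀ ∈ Finset.Ico 1 (2*k+1),
        ((B 0).filter (fun x => ((Ch x) ∩ I t₀).Nonempty)).card ≤ 2*M := by
      by_contra hno
      push_neg at hno
      have hsum : ∑ t ∈ Finset.Ico 1 (2*k+1),
          ((B 0).filter (fun x => ((Ch x) ∩ I t).Nonempty)).card ≤ q*k := by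
        have e1 : ∀ t, ((B 0).filter (fun x => ((Ch x) ∩ I t).Nonempty)).card
            = ∑ x ∈ B 0, if ((Ch x) ∩ I t).Nonempty then 1 else 0 := by
          intro t; rw [Finset.card_filter]
        calc ∑ t ∈ Finset.Ico 1 (2*k+1),
              ((B 0).filter (fun x => ((Ch x) ∩ I t).Nonempty)).card
            = ∑ t ∈ Finset.Ico 1 (2*k+1), ∑ x ∈ B 0,
              (if ((Ch x) ∩ I t).Nonempty then 1 else 0) := by
              exact Finset.sum_congr rfl fun t _ => e1 t
          _ = ∑ x ∈ B 0, ∑ t ∈ Finset.Ico 1 (2*k+1),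
              (if ((Ch x) ∩ I t).Nonempty then 1 else 0) := Finset.sum_comm
          _ ≤ ∑ x ∈ B 0, k := by
              refine Finset.sum_le_sum fun x _ => ?_
              rw [← Finset.card_filter]
              exact hbadT x
          _ = q * k := by
              rw [Finset.sum_const, hBcard 0 (by omega), smul_eq_mul]
      have hge : (2*k) * (2*M+1) ≤ ∑ t ∈ Finset.Ico 1 (2*k+1),
          ((B 0).filter (fun x => ((Ch x) ∩ I t).Nonempty)).card := by
        have h := Finset.card_nsmul_le_sum (Finset.Ico 1 (2*k+1))
          (fun t => ((B 0).filter (fun x => ((Ch x) ∩ I t).Nonempty)).card)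
          (2*M+1) (fun t ht => hno t ht)
        rw [Nat.card_Ico, smul_eq_mul] at h
        have e : 2*k+1-1 = 2*k := by omega
        rwa [e] at h
      have e : 2*k*(2*M+1) = 4*M*k + 2*k := by ring
      have hfin : 2*k*(2*M+1) ≤ 4*M*k := by
        calc 2*k*(2*M+1) ≤ _ := hge
          _ ≤ q*k := hsum
          _ = 4*M*k := by rw [hq]
      have hk0 : (0:ℕ) < k := hk
      linarith
    obtain ⟨t₀, ht₀mem', ht₀⟩ := hex
    rw [Finset.mem_Ico] at ht₀mem'
    have ht₀mem : 1 ≤ t₀ ∧ t₀ < 3*k := by omega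
    -- the good set
    set G' : Finset ℕ := B 0 \ ((B 0).filter (fun x => ((Ch x) ∩ I t₀).Nonempty))
      with hG'
    have hG'mem : ∀ x ∈ G', x ∈ B 0 ∧ ¬ ((Ch x) ∩ I t₀).Nonempty := by
      intro x hx
      rw [hG', Finset.mem_sdiff] at hx
      refine ⟨hx.1, fun hne => hx.2 (Finset.mem_filter.mpr ⟨hx.1, hne⟩)⟩
    have hG'card : 2*M ≤ G'.card := by
      rw [hG', Finset.card_sdiff_of_subset (Finset.filter_subset _ _)]
      have hB0 : (B 0).card = q := hBcard 0 (by omega)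
      omega
    -- constancy on B t₀
    have hconst : ∀ x ∈ G', ∀ y ∈ B t₀, f x y = f x (av t₀) := by
      intro x hx y hy
      replace hx := hG'mem x hx
      have hxB0 : x ∈ B 0 := hx.1
      have hxa : x < av t₀ := blk_lt hsorted (by omega) hxB0 (hav_mem t₀ ht₀mem.2)
      have hay : av t₀ ≤ y := blk_min_le hsorted hy
      have hyz : y ≤ zv t₀ := blk_le_max hsorted (by omega) (hql t₀ ht₀mem.2) hy
      have hym : y < m := by
        have := hAm (hBsub t₀ hy)
        rwa [Finset.mem_range] at this
      refine (hConst x (av t₀) y hxa hay hym ?_).symm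
      intro w hw1 hw2 hwCh
      exact hx.2 ⟨w, Finset.mem_inter.mpr ⟨hwCh, by
        rw [hI]; rw [Finset.mem_Ico]; omega⟩⟩
    -- majority colour
    have hsplit : ∃ (b : Bool) (G : Finset ℕ), G ⊆ G' ∧
        (∀ x ∈ G, f x (av t₀) = b) ∧ M ≤ G.card := by
      set G0 : Finset ℕ := G'.filter (fun x => f x (av t₀) = false) with hG0
      rcases le_or_gt M G0.card with h | h
      · exact ⟨false, G0, Finset.filter_subset _ _,
          fun x hx => (Finset.mem_filter.mp hx).2, h⟩
      · refine ⟨true, G' \ G0, Finset.sdiff_subset, ?_, ?_⟩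
        · intro x hx
          rw [Finset.mem_sdiff] at hx
          have : ¬ (f x (av t₀) = false) := fun hf =>
            hx.2 (Finset.mem_filter.mpr ⟨hx.1, hf⟩)
          simpa using this
        · rw [Finset.card_sdiff_of_subset (Finset.filter_subset _ _), ← hG0]
          omega
    obtain ⟨b, G, hGG', hGcol, hGb⟩ := hsplit
    have hGsub : G ⊆ A := by
      intro x hx
      exact hBsub 0 (hG'mem x (hGG' hx)).1
    -- recursive calls
    obtain ⟨H₀, H₁, hH₀sub, hH₁sub, hH₀, hH₁, hHprod⟩ :=
      ih G (subset_trans hGsub hAm) (by omega)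
    obtain ⟨K₀, K₁, hK₀sub, hK₁sub, hK₀, hK₁, hKprod⟩ :=
      ih (B t₀) (subset_trans (hBsub t₀) hAm)
        (by have := hBcard t₀ ht₀mem.2; omega)
    -- cross properties between G and B t₀
    have hltGB : ∀ x ∈ G, ∀ y ∈ B t₀, x < y := by
      intro x hx y hy
      have hxB0 : x ∈ B 0 := (hG'mem x (hGG' hx)).1
      exact blk_lt hsorted (by omega) hxB0 hy
    have hcross : ∀ x ∈ G, ∀ y ∈ B t₀, f x y = b := by
      intro x hx y hy
      rw [hconst x (hGG' hx) y hy]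
      exact hGcol x hx
    have hpow : 2^(j+1) = 2^j + 2^j := by rw [pow_succ]; ring
    cases b with
    | false =>
      obtain ⟨hhom, hcardu⟩ := homog_union_s5 hH₀sub hK₀sub hltGB hcross hH₀ hK₀
      refine ⟨H₀ ∪ K₀, if K₁.card ≤ H₁.card then H₁ else K₁,
        Finset.union_subset (subset_trans hH₀sub hGsub)
          (subset_trans hK₀sub (hBsub t₀)), ?_, hhom, ?_, ?_⟩
      · split
        · exact subset_trans hH₁sub hGsub
        · exact subset_trans hK₁sub (hBsub t₀)
      · split
        · exact hH₁
        · exact hK₁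
      · rw [hcardu]
        split <;> rename_i hsp
        · calc 2^(j+1) = 2^j + 2^j := hpow
            _ ≤ H₀.card * H₁.card + K₀.card * K₁.card := by omega
            _ ≤ H₀.card * H₁.card + K₀.card * H₁.card :=
                Nat.add_le_add_left (Nat.mul_le_mul_left _ hsp) _
            _ = (H₀.card + K₀.card) * H₁.card := by ring
        · calc 2^(j+1) = 2^j + 2^j := hpow
            _ ≤ H₀.card * H₁.card + K₀.card * K₁.card := by omega
            _ ≤ H₀.card * K₁.card + K₀.card * K₁.card :=
                Nat.add_le_add_right (Nat.mul_le_mul_left _ (by omega)) _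
            _ = (H₀.card + K₀.card) * K₁.card := by ring
    | true =>
      obtain ⟨hhom, hcardu⟩ := homog_union_s5 hH₁sub hK₁sub hltGB hcross hH₁ hK₁
      refine ⟨if K₀.card ≤ H₀.card then H₀ else K₀, H₁ ∪ K₁, ?_,
        Finset.union_subset (subset_trans hH₁sub hGsub)
          (subset_trans hK₁sub (hBsub t₀)), ?_, hhom, ?_⟩
      · split
        · exact subset_trans hH₀sub hGsub
        · exact subset_trans hK₀sub (hBsub t₀)
      · split
        · exact hH₀
        · exact hK₀
      · rw [hcardu]
        split <;> rename_i hsp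
        · calc 2^(j+1) = 2^j + 2^j := hpow
            _ ≤ H₀.card * H₁.card + K₀.card * K₁.card := by omega
            _ ≤ H₀.card * H₁.card + H₀.card * K₁.card := by
                exact Nat.add_le_add_left (Nat.mul_le_mul_right _ hsp) _
            _ = H₀.card * (H₁.card + K₁.card) := by ring
        · calc 2^(j+1) = 2^j + 2^j := hpow
            _ ≤ H₀.card * H₁.card + K₀.card * K₁.card := by omega
            _ ≤ K₀.card * H₁.card + K₀.card * K₁.card := by
                exact Nat.add_le_add_right (Nat.mul_le_mul_right _ (by omega)) _
            _ = K₀.card * (H₁.card + K₁.card) := by ring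

theorem stmt5 : ∃ C : ℕ, ∀ d k : ℕ, 1 ≤ d → C ≤ k →
    ∀ f : ℕ → ℕ → Bool, AtMostUnstable f (Finset.range (k ^ (2 * d))) k →
    ∃ H ⊆ Finset.range (k ^ (2 * d)), Homogeneous f H ∧ 2 ^ d ≤ H.card ^ 2 := by
  refine ⟨12, ?_⟩
  intro d k hd hk f hu
  set m := k ^ (2*d) with hm
  have hk1 : 1 ≤ k := by omega
  have hcard : (12*k)^d ≤ (Finset.range m).card := by
    rw [Finset.card_range, hm, two_mul, pow_add]
    calc (12*k)^d = 12^d * k^d := mul_pow _ _ _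
      _ ≤ k^d * k^d := by
          exact Nat.mul_le_mul_right _ (Nat.pow_le_pow_left hk _)
      _ = k^d * k^d := rfl
  obtain ⟨H₀, H₁, hs0, hs1, hh0, hh1, hprod⟩ :=
    key m k f (Chm m f) hk1 (Chm_card m k f hu) (Chm_const m f) d
      (Finset.range m) (subset_refl _) hcard
  rcases le_or_gt H₀.card H₁.card with h | h
  · refine ⟨H₁, hs1, ⟨true, hh1⟩, ?_⟩
    calc 2^d ≤ H₀.card * H₁.card := hprod
      _ ≤ H₁.card * H₁.card := Nat.mul_le_mul_right _ h
      _ = H₁.card ^ 2 := (sq _).symm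
  · refine ⟨H₀, hs0, ⟨false, hh0⟩, ?_⟩
    calc 2^d ≤ H₀.card * H₁.card := hprod
      _ ≤ H₀.card * H₀.card := Nat.mul_le_mul_left _ (by omega)
      _ = H₀.card ^ 2 := (sq _).symm
end

section
/- For every sufficiently large k, there exists a 2-colouring f of the pairs from a set A of size 2^{⌈k/4⌉} with the following property: for every j with k ≤ j ≤ 2^{k/4} and every subset C ⊆ A of size 2j with first j elements c_1 < ... < c_j and last j elements c_{j+1} < ... < c_{2j}, there exists some i ∈ {1,...,j} such that the binary string ⟨f(c_i,c_{j+1}),...,f(c_i,c_{2j})⟩ contains no run of k+1 equal consecutive bits. -/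
open Finset

section Aux
open scoped Classical

lemma getD_map_range {β : Type*} (g : ℕ → β) (j a : ℕ) (ha : a < j) (dflt : β) :
    ((List.range j).map g).getD a dflt = g a := by
  rw [List.getD_eq_getElem ((List.range j).map g) dflt (by simpa using ha)]
  simp

lemma aux_agree {α : Type*} [Fintype α] [DecidableEq α] (S : Finset α) (g : α → Bool)
    {inst : DecidablePred fun f : α → Bool => ∀ a ∈ S, f a = g a} :
    (@Finset.filter _ _ inst Finset.univ).card
      ≤ 2 ^ (Fintype.card α - S.card) := by
  classical
  rw [Finset.filter_congr_decidable]
  have h := Finset.card_le_card_of_injOn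
    (s := Finset.univ.filter fun f : α → Bool => ∀ a ∈ S, f a = g a)
    (t := (Finset.univ : Finset ({x // x ∈ Sᶜ} → Bool)))
    (fun (f : α → Bool) (a : {x // x ∈ Sᶜ}) => f a)
    (fun f _ => Finset.mem_univ _) ?_
  · refine h.trans (le_of_eq ?_)
    rw [Finset.card_univ, Fintype.card_fun, Fintype.card_coe, Finset.card_compl]
    simp
  · intro f hf f' hf' hEq
    simp only [Finset.coe_filter, Set.mem_setOf_eq, Finset.mem_univ, true_and] at hf hf'
    funext a
    by_cases ha : a ∈ S
    · rw [hf a ha, hf' a ha]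
    · have ha' : a ∈ Sᶜ := by simpa using ha
      exact congrFun hEq ⟨a, ha'⟩

lemma aux_row {α : Type*} [Fintype α] [DecidableEq α] (k j : ℕ) (d : ℕ → α)
    (hd : ∀ a < j, ∀ b < j, d a = d b → a = b)
    {inst : DecidablePred fun s : α → Bool => hasRunL k ((List.range j).map fun l => s (d l))} :
    (@Finset.filter _ _ inst Finset.univ).card
      ≤ 2 * j * 2 ^ (Fintype.card α - (k + 1)) := by
  classical
  rw [Finset.filter_congr_decidable]
  set I : Finset (ℕ × Bool) := ((Finset.range j).filter fun w => w + k < j) ×ˢ Finset.univ with hI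
  have hsub : (Finset.univ.filter fun s : α → Bool =>
      hasRunL k ((List.range j).map fun l => s (d l))) ⊆
      I.biUnion fun p => Finset.univ.filter fun s : α → Bool =>
        ∀ a ∈ (Finset.range (k+1)).image fun t => d (p.1 + t), s a = (fun _ => p.2) a := by
    intro s hs
    simp only [Finset.mem_filter, Finset.mem_univ, true_and] at hs
    obtain ⟨w, hw, hcon⟩ := hs
    rw [List.length_map, List.length_range] at hw
    refine Finset.mem_biUnion.2 ⟨(w, s (d w)), ?_, ?_⟩
    · have hwj : w < j := lt_of_le_of_lt (Nat.le_add_right w k) hw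
      simp [hI, hwj, hw]
    · simp only [Finset.mem_filter, Finset.mem_univ, true_and, Finset.mem_image,
        Finset.mem_range]
      rintro a ⟨t, ht, rfl⟩
      have h1 := hcon (w + t) w (Nat.le_add_right w t) (by omega) le_rfl (by omega)
      rw [getD_map_range _ j (w+t) (by omega) false, getD_map_range _ j w (by omega) false] at h1
      exact h1
  refine (Finset.card_le_card hsub).trans ((Finset.card_biUnion_le).trans ?_)
  have hbound : ∀ p ∈ I, (Finset.univ.filter fun s : α → Bool =>
      ∀ a ∈ (Finset.range (k+1)).image fun t => d (p.1 + t), s a = (fun _ => p.2) a).card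
      ≤ 2 ^ (Fintype.card α - (k + 1)) := by
    intro p hp
    have hwk : p.1 + k < j := by
      simp only [hI, Finset.mem_product, Finset.mem_filter, Finset.mem_range] at hp
      exact hp.1.2
    have hcard : ((Finset.range (k+1)).image fun t => d (p.1 + t)).card = k + 1 := by
      rw [Finset.card_image_of_injOn, Finset.card_range]
      intro a ha b hb hab
      simp only [Finset.coe_range, Set.mem_Iio] at ha hb
      have := hd (p.1 + a) (by omega) (p.1 + b) (by omega) hab
      omega
    have := aux_agree ((Finset.range (k+1)).image fun t => d (p.1 + t)) (fun _ => p.2)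
      (inst := inferInstance)
    rwa [hcard] at this
  calc ∑ p ∈ I, (Finset.univ.filter fun s : α → Bool =>
        ∀ a ∈ (Finset.range (k+1)).image fun t => d (p.1 + t), s a = (fun _ => p.2) a).card
      ≤ ∑ _p ∈ I, 2 ^ (Fintype.card α - (k + 1)) := Finset.sum_le_sum hbound
    _ = I.card * 2 ^ (Fintype.card α - (k + 1)) := by rw [Finset.sum_const, smul_eq_mul]
    _ ≤ 2 * j * 2 ^ (Fintype.card α - (k + 1)) := by
        apply Nat.mul_le_mul_right
        rw [hI, Finset.card_product]
        have := Finset.card_filter_le (Finset.range j) (fun w => w + k < j)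
        simp only [Finset.card_range] at this
        simp only [Finset.card_univ, Fintype.card_bool]
        omega

lemma aux_pi {α β : Type*} [Fintype α] [DecidableEq α] [Fintype β] [DecidableEq β]
    (B : Finset β) (T : Finset α)
    {inst : DecidablePred fun F : α → β => ∀ x ∈ T, F x ∈ B} :
    (@Finset.filter _ _ inst Finset.univ).card
      ≤ B.card ^ T.card * (Fintype.card β) ^ (Fintype.card α - T.card) := by
  classical
  rw [Finset.filter_congr_decidable]
  have hsub : (Finset.univ.filter fun F : α → β => ∀ x ∈ T, F x ∈ B)
      ⊆ Fintype.piFinset fun x => if x ∈ T then B else Finset.univ := by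
    intro F hF
    simp only [Finset.mem_filter, Finset.mem_univ, true_and] at hF
    refine Fintype.mem_piFinset.2 fun x => ?_
    by_cases hx : x ∈ T <;> simp [hx, hF x]
  refine (Finset.card_le_card hsub).trans (le_of_eq ?_)
  rw [Fintype.card_piFinset]
  have : ∀ x : α, (if x ∈ T then B else (Finset.univ : Finset β)).card
      = if x ∈ T then B.card else Fintype.card β := by
    intro x; by_cases hx : x ∈ T <;> simp [hx]
  rw [Finset.prod_congr rfl (fun x _ => this x), Finset.prod_ite, Finset.prod_const,
    Finset.prod_const, Finset.filter_univ_mem]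
  congr 1
  have : (Finset.univ.filter fun x => ¬ x ∈ T) = Tᶜ := by
    ext x; simp
  rw [this, Finset.card_compl]

lemma aux_jc (n k j : ℕ) (hjn : j ≤ n) (c d : ℕ → Fin n)
    (hc : ∀ a < j, ∀ b < j, c a = c b → a = b)
    (hd : ∀ a < j, ∀ b < j, d a = d b → a = b)
    {inst : DecidablePred fun F : Fin n → Fin n → Bool =>
        ∀ i < j, hasRunL k ((List.range j).map fun l => F (c i) (d l))} :
    (@Finset.filter _ _ inst Finset.univ).card
      ≤ (2 * j * 2 ^ (n - (k+1)))^j * (2^n)^(n - j) := by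
  classical
  rw [Finset.filter_congr_decidable]
  set B := (Finset.univ.filter fun s : Fin n → Bool =>
      hasRunL k ((List.range j).map fun l => s (d l))) with hB
  set T := (Finset.range j).image c with hT
  have hsub : (Finset.univ.filter fun F : Fin n → Fin n → Bool =>
        ∀ i < j, hasRunL k ((List.range j).map fun l => F (c i) (d l)))
      ⊆ (Finset.univ.filter fun F : Fin n → Fin n → Bool => ∀ x ∈ T, F x ∈ B) := by
    intro F hF
    simp only [Finset.mem_filter, Finset.mem_univ, true_and] at hF ⊢
    intro x hx
    simp only [hT, Finset.mem_image, Finset.mem_range] at hx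
    obtain ⟨i, hi, rfl⟩ := hx
    simp only [hB, Finset.mem_filter, Finset.mem_univ, true_and]
    exact hF i hi
  refine (Finset.card_le_card hsub).trans ((aux_pi B T).trans ?_)
  have hTcard : T.card = j := by
    rw [hT, Finset.card_image_of_injOn, Finset.card_range]
    intro a ha b hb hab
    simp only [Finset.coe_range, Set.mem_Iio] at ha hb
    exact hc a ha b hb hab
  have hBcard : B.card ≤ 2 * j * 2 ^ (n - (k+1)) := by
    have := aux_row (α := Fin n) k j d hd (inst := inferInstance)
    simpa using this
  rw [hTcard]
  have h2 : Fintype.card (Fin n → Bool) = 2 ^ n := by simp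
  have h3 : Fintype.card (Fin n) = n := by simp
  rw [h2, h3]
  exact Nat.mul_le_mul (Nat.pow_le_pow_left hBcard j) le_rfl

lemma aux_choose_le (n : ℕ) : ∀ r, Nat.choose n r ≤ n ^ r := by
  intro r; induction r with
  | zero => simp
  | succ r ih =>
    calc n.choose (r+1) ≤ n.choose (r+1) * (r+1) := Nat.le_mul_of_pos_right _ (Nat.succ_pos r)
      _ = n.choose r * (n - r) := Nat.choose_succ_right_eq n r
      _ ≤ n ^ r * n := Nat.mul_le_mul ih (Nat.sub_le n r)
      _ = n ^ (r+1) := (pow_succ n r).symm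

lemma aux_pow (a : ℕ) (ha : 8 ≤ a) : 4 * a + 4 ≤ 2 ^ a := by
  induction a with
  | zero => omega
  | succ b ih =>
    rcases Nat.lt_or_ge b 8 with hb | hb
    · interval_cases b <;> simp_all <;> omega
    · have h1 := ih hb
      have h2 : (8:ℕ) ≤ 2 ^ b := by
        calc (8:ℕ) ≤ 4 * b + 4 := by omega
          _ ≤ 2 ^ b := h1
      rw [pow_succ]
      omega

end Aux


def cFn (n : ℕ) (hn : 0 < n) (C : Finset ℕ) (i : ℕ) : Fin n :=
  ⟨(Finset.sort C (· ≤ ·)).getD i 0 % n, Nat.mod_lt _ hn⟩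

lemma cFn_val (n : ℕ) (hn : 0 < n) (C : Finset ℕ) (hC : C ⊆ Finset.range n) (i : ℕ)
    (hi : i < C.card) : (cFn n hn C i : ℕ) = (Finset.sort C (· ≤ ·)).getD i 0 := by
  have hlen : i < (Finset.sort C (· ≤ ·)).length := by
    rwa [Finset.length_sort]
  have hmem : (Finset.sort C (· ≤ ·)).getD i 0 ∈ C := by
    rw [List.getD_eq_getElem _ _ hlen]
    exact (Finset.mem_sort _).1 (List.getElem_mem _)
  have hlt : (Finset.sort C (· ≤ ·)).getD i 0 < n := by
    have := hC hmem
    simpa [Finset.mem_range] using this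
  simp only [cFn]
  exact Nat.mod_eq_of_lt hlt

lemma cFn_inj (n : ℕ) (hn : 0 < n) (C : Finset ℕ) (hC : C ⊆ Finset.range n)
    {a b : ℕ} (ha : a < C.card) (hb : b < C.card) (h : cFn n hn C a = cFn n hn C b) :
    a = b := by
  have h2 := congrArg (fun x : Fin n => (x : ℕ)) h
  simp only [cFn_val n hn C hC a ha, cFn_val n hn C hC b hb] at h2
  have hla : a < (Finset.sort C (· ≤ ·)).length := by rwa [Finset.length_sort]
  have hlb : b < (Finset.sort C (· ≤ ·)).length := by rwa [Finset.length_sort]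
  rw [List.getD_eq_getElem _ _ hla, List.getD_eq_getElem _ _ hlb] at h2
  exact ((Finset.sort_nodup C (· ≤ ·)).getElem_inj_iff).1 h2

lemma aux_term (k q m n j : ℕ) (hq8 : 8 ≤ q) (hn : n = 2 ^ m) (hmq : m ≤ q + 1) (hk4q : 4 * q ≤ k)
    (hkn : k + 1 ≤ n) (hjq : j ≤ 2 ^ q) (hjn : j ≤ n) :
    n.choose (2*j) * ((2 * j * 2 ^ (n - (k+1)))^j * (2^n)^(n - j)) * 2 ^ (j * (q - 2))
      ≤ 2 ^ (n * n) := by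
  have h1 : n.choose (2*j) ≤ 2 ^ (m * (2*j)) := by
    calc n.choose (2*j) ≤ n ^ (2*j) := aux_choose_le n (2*j)
      _ = 2 ^ (m * (2*j)) := by rw [hn, ← pow_mul]
  have h2 : (2*j)^j ≤ 2 ^ ((q+1)*j) := by
    have h2j : 2*j ≤ 2^(q+1) := by
      rw [pow_succ]
      omega
    calc (2*j)^j ≤ (2^(q+1))^j := Nat.pow_le_pow_left h2j j
      _ = 2^((q+1)*j) := by rw [← pow_mul]
  have h3 : (2 * j * 2 ^ (n - (k+1)))^j ≤ 2 ^ ((q+1)*j + (n-(k+1))*j) := by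
    rw [mul_pow, pow_add]
    exact Nat.mul_le_mul h2 (le_of_eq (by rw [← pow_mul]))
  have h4 : ((2:ℕ)^n)^(n-j) = 2^(n*(n-j)) := by rw [← pow_mul]
  have hexp : m*(2*j) + ((q+1)*j + (n-(k+1))*j + n*(n-j)) + j*(q-2) ≤ n*n := by
    have key : 2*m + (q+1) + (n-(k+1)) + (q-2) ≤ (n-(k+1)) + (k+1) := by omega
    calc m*(2*j) + ((q+1)*j + (n-(k+1))*j + n*(n-j)) + j*(q-2)
        = (2*m + (q+1) + (n-(k+1)) + (q-2)) * j + n*(n-j) := by ring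
      _ ≤ ((n-(k+1)) + (k+1)) * j + n*(n-j) :=
          Nat.add_le_add_right (Nat.mul_le_mul_right _ key) _
      _ = n * j + n * (n-j) := by rw [Nat.sub_add_cancel hkn]
      _ = n * (j + (n - j)) := by ring
      _ = n * n := by rw [Nat.add_sub_cancel' hjn]
  calc n.choose (2*j) * ((2 * j * 2 ^ (n - (k+1)))^j * (2^n)^(n - j)) * 2 ^ (j * (q - 2))
      ≤ 2^(m*(2*j)) * (2^((q+1)*j + (n-(k+1))*j) * 2^(n*(n-j))) * 2^(j*(q-2)) :=
        Nat.mul_le_mul (Nat.mul_le_mul h1 (Nat.mul_le_mul h3 (le_of_eq h4))) le_rfl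
    _ = 2^(m*(2*j) + ((q+1)*j + (n-(k+1))*j + n*(n-j)) + j*(q-2)) := by
        rw [← pow_add, ← pow_add, ← pow_add]
    _ ≤ 2^(n*n) := Nat.pow_le_pow_right (by norm_num) hexp


theorem stmt11 : ∃ N : ℕ, ∀ k : ℕ, N ≤ k →
    ∃ f : ℕ → ℕ → Bool,
      ∀ j : ℕ, k ≤ j → j ≤ 2 ^ (k / 4) →
        ∀ C ⊆ Finset.range (2 ^ ((k + 3) / 4)), C.card = 2 * j →
          ∃ i < j, ¬ hasRunL k ((List.range j).map fun l =>
            f ((Finset.sort C (· ≤ ·)).getD i 0)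
              ((Finset.sort C (· ≤ ·)).getD (j + l) 0)) := by
  classical
  refine ⟨32, fun k hk => ?_⟩
  set q := k / 4 with hq
  set m := (k + 3) / 4 with hm
  have hq8 : 8 ≤ q := by omega
  have hmq : m ≤ q + 1 := by omega
  have hqm : q ≤ m := by omega
  have hk4q : 4 * q ≤ k := by omega
  have hkq : k + 1 ≤ 2 ^ q := by
    have := aux_pow q hq8
    omega
  have hqn : (2:ℕ) ^ q ≤ 2 ^ m := Nat.pow_le_pow_right (by norm_num) hqm
  set n := 2 ^ m with hn
  have hkn : k + 1 ≤ n := le_trans hkq hqn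
  have hnpos : 0 < n := by positivity
  set P := Finset.Icc k (2 ^ q) with hP
  set Bad : Finset (Fin n → Fin n → Bool) := Finset.univ.filter (fun F =>
    ∃ j ∈ P, ∃ C ∈ (Finset.range n).powersetCard (2*j),
      ∀ i < j, hasRunL k ((List.range j).map fun l =>
        F (cFn n hnpos C i) (cFn n hnpos C (j + l)))) with hBad
  have hcard : Bad.card < 2 ^ (n * n) := by
    have hsub : Bad ⊆ P.biUnion (fun j => ((Finset.range n).powersetCard (2*j)).biUnion
        (fun C => Finset.univ.filter (fun F : Fin n → Fin n → Bool =>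
          ∀ i < j, hasRunL k ((List.range j).map fun l =>
            F (cFn n hnpos C i) (cFn n hnpos C (j + l)))))) := by
      intro F hFm
      simp only [hBad, Finset.mem_filter, Finset.mem_univ, true_and] at hFm
      obtain ⟨j, hj, C, hC, hall⟩ := hFm
      exact Finset.mem_biUnion.2 ⟨j, hj, Finset.mem_biUnion.2
        ⟨C, hC, Finset.mem_filter.2 ⟨Finset.mem_univ _, hall⟩⟩⟩
    have hstep : Bad.card ≤ ∑ j ∈ P, n.choose (2*j) *
        ((2 * j * 2 ^ (n - (k+1)))^j * (2^n)^(n - j)) := by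
      refine (Finset.card_le_card hsub).trans (Finset.card_biUnion_le.trans ?_)
      refine Finset.sum_le_sum (fun j hj => ?_)
      refine Finset.card_biUnion_le.trans ?_
      have hjq : j ≤ 2 ^ q := (Finset.mem_Icc.1 hj).2
      have hkj : k ≤ j := (Finset.mem_Icc.1 hj).1
      have hjn : j ≤ n := le_trans hjq hqn
      have hbnd : ∀ C ∈ (Finset.range n).powersetCard (2*j),
          (Finset.univ.filter (fun F : Fin n → Fin n → Bool =>
            ∀ i < j, hasRunL k ((List.range j).map fun l =>
              F (cFn n hnpos C i) (cFn n hnpos C (j + l))))).card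
            ≤ (2 * j * 2 ^ (n - (k+1)))^j * (2^n)^(n - j) := by
        intro C hC
        obtain ⟨hCsub, hCcard⟩ := Finset.mem_powersetCard.1 hC
        refine aux_jc n k j hjn (fun i => cFn n hnpos C i) (fun l => cFn n hnpos C (j + l))
          ?_ ?_
        · intro a ha b hb hab
          exact cFn_inj n hnpos C hCsub (by omega) (by omega) hab
        · intro a ha b hb hab
          have := cFn_inj n hnpos C hCsub (a := j + a) (b := j + b) (by omega) (by omega) hab
          omega
      calc ∑ C ∈ (Finset.range n).powersetCard (2*j), (Finset.univ.filter
            (fun F : Fin n → Fin n → Bool =>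
            ∀ i < j, hasRunL k ((List.range j).map fun l =>
              F (cFn n hnpos C i) (cFn n hnpos C (j + l))))).card
          ≤ ∑ _C ∈ (Finset.range n).powersetCard (2*j),
              (2 * j * 2 ^ (n - (k+1)))^j * (2^n)^(n - j) := Finset.sum_le_sum hbnd
        _ = n.choose (2*j) * ((2 * j * 2 ^ (n - (k+1)))^j * (2^n)^(n - j)) := by
            rw [Finset.sum_const, smul_eq_mul, Finset.card_powersetCard, Finset.card_range]
    have hterm : ∀ j ∈ P, n.choose (2*j) *
        ((2 * j * 2 ^ (n - (k+1)))^j * (2^n)^(n - j)) * 2 ^ (k * (q - 2))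
          ≤ 2 ^ (n * n) := by
      intro j hj
      have hjq : j ≤ 2 ^ q := (Finset.mem_Icc.1 hj).2
      have hkj : k ≤ j := (Finset.mem_Icc.1 hj).1
      have hjn : j ≤ n := le_trans hjq hqn
      refine le_trans ?_ (aux_term k q m n j hq8 hn hmq hk4q hkn hjq hjn)
      exact Nat.mul_le_mul le_rfl (Nat.pow_le_pow_right (by norm_num)
        (Nat.mul_le_mul hkj le_rfl))
    have hPcard : P.card ≤ 2 ^ q := by
      rw [hP, Nat.card_Icc]
      omega
    have hqlt : 2 ^ q < 2 ^ (k * (q - 2)) := by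
      apply Nat.pow_lt_pow_right (by norm_num)
      have h32 : 32 * (q - 2) ≤ k * (q - 2) := Nat.mul_le_mul_right _ (by omega)
      omega
    have hmul : Bad.card * 2 ^ (k * (q - 2)) < 2 ^ (n * n) * 2 ^ (k * (q - 2)) := by
      calc Bad.card * 2 ^ (k * (q - 2))
          ≤ (∑ j ∈ P, n.choose (2*j) *
            ((2 * j * 2 ^ (n - (k+1)))^j * (2^n)^(n - j))) * 2 ^ (k * (q - 2)) :=
            Nat.mul_le_mul hstep le_rfl
        _ = ∑ j ∈ P, n.choose (2*j) *
            ((2 * j * 2 ^ (n - (k+1)))^j * (2^n)^(n - j)) * 2 ^ (k * (q - 2)) := by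
            rw [Finset.sum_mul]
        _ ≤ ∑ _j ∈ P, 2 ^ (n * n) := Finset.sum_le_sum hterm
        _ = P.card * 2 ^ (n * n) := by rw [Finset.sum_const, smul_eq_mul]
        _ ≤ 2 ^ q * 2 ^ (n * n) := Nat.mul_le_mul hPcard le_rfl
        _ < 2 ^ (k * (q - 2)) * 2 ^ (n * n) :=
            mul_lt_mul_of_pos_right hqlt (by positivity)
        _ = 2 ^ (n * n) * 2 ^ (k * (q - 2)) := mul_comm _ _
    exact lt_of_mul_lt_mul_right hmul (Nat.zero_le _)
  have hex : ∃ F : Fin n → Fin n → Bool, F ∉ Bad := by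
    by_contra h
    push_neg at h
    have hle : (Finset.univ : Finset (Fin n → Fin n → Bool)).card ≤ Bad.card :=
      Finset.card_le_card (fun F _ => h F)
    rw [Finset.card_univ, Fintype.card_fun, Fintype.card_fun] at hle
    simp only [Fintype.card_bool, Fintype.card_fin, ← pow_mul] at hle
    omega
  obtain ⟨F, hF⟩ := hex
  refine ⟨fun x y => F ⟨x % n, Nat.mod_lt _ hnpos⟩ ⟨y % n, Nat.mod_lt _ hnpos⟩, ?_⟩
  intro j hj1 hj2 C hC hCcard
  have hjP : j ∈ P := Finset.mem_Icc.2 ⟨hj1, hj2⟩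
  have hCP : C ∈ (Finset.range n).powersetCard (2*j) :=
    Finset.mem_powersetCard.2 ⟨hC, hCcard⟩
  have hnot : ¬ ∀ i < j, hasRunL k ((List.range j).map fun l =>
      F (cFn n hnpos C i) (cFn n hnpos C (j + l))) := by
    intro hall
    exact hF (Finset.mem_filter.2 ⟨Finset.mem_univ F, ⟨j, hjP, C, hCP, hall⟩⟩)
  push_neg at hnot
  obtain ⟨i, hi, hrun⟩ := hnot
  exact ⟨i, hi, hrun⟩
end

section
/- For k ≥ 1 and k ≤ j ≤ 2^{k/4}: if a 2-colouring f of pairs of a set of size 2j is chosen uniformly at random, then for a fixed partition of the set into its first half {c_1,...,c_j} and second half {c_{j+1},...,c_{2j}}, the probability that for every i ∈ {1,...,j} the string ⟨f(c_i,c_{j+1}),...,f(c_i,c_{2j})⟩ contains a run of k+1 equal consecutive bits is less than (j/2^k)^j. -/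
section AuxStmt12
open Finset

/-- Row of a colouring restricted to the second half, as a list. -/
def rowList (j : ℕ) (r : Fin (2*j) → Bool) : List Bool :=
  (List.range j).map fun l => if h : j + l < 2*j then r ⟨j+l, h⟩ else false

/-- Rows whose window [j+i, j+i+k] is constantly b. -/
def runSet (k j i : ℕ) (b : Bool) : Finset (Fin (2*j) → Bool) :=
  Fintype.piFinset fun x => if j + i ≤ x.val ∧ x.val ≤ j + i + k then {b} else Finset.univ

lemma rowList_getD (j : ℕ) (r : Fin (2*j) → Bool) (a : ℕ) (ha : a < j) :
    (rowList j r).getD a false = if h : j + a < 2*j then r ⟨j+a, h⟩ else false := by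
  have hlen : a < (rowList j r).length := by simp [rowList]; omega
  rw [List.getD_eq_getElem _ _ hlen]
  simp [rowList]

lemma card_runSet {k j i : ℕ} (hik : i + k < j) (b : Bool) :
    (runSet k j i b).card = 2 ^ (2*j - (k+1)) := by
  rw [runSet, Fintype.card_piFinset]
  have h1 : ∀ x : Fin (2*j),
      ((if j + i ≤ x.val ∧ x.val ≤ j + i + k then ({b} : Finset Bool) else Finset.univ).card)
      = if j + i ≤ x.val ∧ x.val ≤ j + i + k then 1 else 2 := by
    intro x; split <;> simp
  rw [Finset.prod_congr rfl fun x _ => h1 x, Finset.prod_ite, Finset.prod_const,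
    Finset.prod_const, one_pow, one_mul]
  congr 1
  have hb1 : j + i < 2*j := by omega
  have hb2 : j + i + k < 2*j := by omega
  have hicc : (Finset.univ.filter fun x : Fin (2*j) => j + i ≤ x.val ∧ x.val ≤ j + i + k)
      = Finset.Icc ⟨j+i, hb1⟩ ⟨j+i+k, hb2⟩ := by
    ext x; simp [Fin.le_def]
  rw [Finset.filter_not, Finset.card_sdiff_of_subset (Finset.filter_subset _ _), hicc, Fin.card_Icc]
  simp only [Fin.val_mk, Finset.card_univ, Fintype.card_fin]
  omega

lemma badRows_mem {k j : ℕ} (r : Fin (2*j) → Bool) (h : hasRunL k (rowList j r)) :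
    r ∈ (Finset.range (j-k)).biUnion (fun i => runSet k j i true ∪ runSet k j i false) := by
  obtain ⟨i, hlen, hrun⟩ := h
  have hlenj : (rowList j r).length = j := by simp [rowList]
  rw [hlenj] at hlen
  have hji : j + i < 2*j := by omega
  set b := r ⟨j+i, hji⟩ with hb
  rw [Finset.mem_biUnion]
  refine ⟨i, by simp; omega, ?_⟩
  have hmem : r ∈ runSet k j i b := by
    rw [runSet, Fintype.mem_piFinset]
    intro x
    split
    · rename_i hw
      simp only [Finset.mem_singleton]
      set a := x.val - j with hadef
      have hx : x = ⟨j + a, by omega⟩ := by apply Fin.ext; simp; omega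
      have h1 : (rowList j r).getD a false = r x := by
        rw [rowList_getD j r a (by omega), dif_pos (by omega : j + a < 2*j)]
        exact congrArg r hx.symm
      have h2 : (rowList j r).getD i false = b := by
        rw [rowList_getD j r i (by omega), dif_pos hji]
      have := hrun a i (by omega) (by omega) (by omega) (by omega)
      rw [h1, h2] at this
      exact this
    · exact Finset.mem_univ _
  by_cases hbv : b = true
  · rw [hbv] at hmem; exact Finset.mem_union_left _ hmem
  · rw [Bool.not_eq_true] at hbv; rw [hbv] at hmem; exact Finset.mem_union_right _ hmem

end AuxStmt12

open Classical in
/-- Counting form: the number of colourings for which every row `i < j` of the cross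
block contains a run of `k+1` equal bits, multiplied by `2^(k·j)`, is less than
`j^j · 2^(4j²)`; i.e. the probability is less than `(j/2^k)^j`. -/
theorem stmt12 (k j : ℕ) (hk : 1 ≤ k) (h1 : k ≤ j) (h2 : j ≤ 2 ^ (k / 4)) :
    ((Finset.univ : Finset (Fin (2 * j) → Fin (2 * j) → Bool)).filter fun f =>
        ∀ i < j, hasRunL k ((List.range j).map fun l =>
          if h : i < 2 * j ∧ j + l < 2 * j then f ⟨i, h.1⟩ ⟨j + l, h.2⟩ else false)).card
      * 2 ^ (k * j) < j ^ j * 2 ^ (4 * j * j) := by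
  classical
  have hj : 1 ≤ j := le_trans hk h1
  set N := (Finset.univ.filter fun r : Fin (2*j) → Bool => hasRunL k (rowList j r)).card with hN
  have hNle : N ≤ (j - k) * 2 ^ (2*j - k) := by
    have hsub : (Finset.univ.filter fun r : Fin (2*j) → Bool => hasRunL k (rowList j r))
        ⊆ (Finset.range (j-k)).biUnion (fun i => runSet k j i true ∪ runSet k j i false) := by
      intro r hr
      rw [Finset.mem_filter] at hr
      exact badRows_mem r hr.2
    calc N ≤ ((Finset.range (j-k)).biUnion fun i => runSet k j i true ∪ runSet k j i false).card :=
          Finset.card_le_card hsub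
      _ ≤ ∑ i ∈ Finset.range (j-k), (runSet k j i true ∪ runSet k j i false).card :=
          Finset.card_biUnion_le
      _ ≤ ∑ i ∈ Finset.range (j-k), 2 ^ (2*j - k) := by
          apply Finset.sum_le_sum
          intro i hi
          rw [Finset.mem_range] at hi
          have hik : i + k < j := by omega
          calc (runSet k j i true ∪ runSet k j i false).card
              ≤ (runSet k j i true).card + (runSet k j i false).card := Finset.card_union_le _ _
            _ = 2 ^ (2*j - (k+1)) + 2 ^ (2*j - (k+1)) := by rw [card_runSet hik, card_runSet hik]
            _ = 2 ^ (2*j - k) := by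
                have he : 2*j - k = (2*j - (k+1)) + 1 := by omega
                rw [he, pow_succ]; ring
      _ = (j - k) * 2 ^ (2*j - k) := by rw [Finset.sum_const, Finset.card_range, smul_eq_mul]
  have hfilter : ((Finset.univ : Finset (Fin (2 * j) → Fin (2 * j) → Bool)).filter fun f =>
        ∀ i < j, hasRunL k ((List.range j).map fun l =>
          if h : i < 2 * j ∧ j + l < 2 * j then f ⟨i, h.1⟩ ⟨j + l, h.2⟩ else false))
      = Fintype.piFinset fun x : Fin (2*j) =>
          if x.val < j then Finset.univ.filter (fun r => hasRunL k (rowList j r)) else Finset.univ := by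
    have hlist : ∀ (i : ℕ) (hi : i < 2*j) (f : Fin (2*j) → Fin (2*j) → Bool),
        ((List.range j).map fun l => if h : i < 2*j ∧ j + l < 2*j then f ⟨i, h.1⟩ ⟨j+l, h.2⟩ else false)
        = rowList j (f ⟨i, hi⟩) := by
      intro i hi f
      unfold rowList
      apply List.map_congr_left
      intro l hl
      rw [List.mem_range] at hl
      rw [dif_pos ⟨hi, by omega⟩, dif_pos (by omega : j + l < 2*j)]
    ext f
    simp only [Finset.mem_filter, Finset.mem_univ, true_and, Fintype.mem_piFinset]
    constructor
    · intro H x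
      split
      · rename_i hx
        rw [Finset.mem_filter]
        refine ⟨Finset.mem_univ _, ?_⟩
        have hh := H x.val hx
        rwa [hlist x.val x.isLt f, Fin.eta] at hh
      · exact Finset.mem_univ _
    · intro H i hi
      have hx := H ⟨i, by omega⟩
      rw [if_pos (by simpa using hi), Finset.mem_filter] at hx
      rw [hlist i (by omega) f]
      exact hx.2
  rw [hfilter, Fintype.card_piFinset]
  have hcard : ∀ x : Fin (2*j),
      ((if x.val < j then Finset.univ.filter (fun r : Fin (2*j) → Bool => hasRunL k (rowList j r))
        else Finset.univ).card) = if x.val < j then N else 2 ^ (2*j) := by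
    intro x; split
    · rfl
    · simp [Finset.card_univ]
  rw [Finset.prod_congr rfl fun x _ => hcard x, Finset.prod_ite, Finset.prod_const,
    Finset.prod_const]
  have hc1 : (Finset.univ.filter fun x : Fin (2*j) => x.val < j).card = j := by
    have : (Finset.univ.filter fun x : Fin (2*j) => x.val < j) = Finset.Iio ⟨j, by omega⟩ := by
      ext x; simp [Fin.lt_def]
    rw [this, Fin.card_Iio]
  have hc2 : (Finset.univ.filter fun x : Fin (2*j) => ¬ x.val < j).card = j := by
    rw [Finset.filter_not, Finset.card_sdiff_of_subset (Finset.filter_subset _ _), hc1]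
    simp only [Finset.card_univ, Fintype.card_fin]
    omega
  rw [hc1, hc2]
  -- goal : N ^ j * (2 ^ (2*j)) ^ j * 2 ^ (k*j) < j ^ j * 2 ^ (4*j*j)
  have hbase : N * 2 ^ k < j * 2 ^ (2*j) := by
    calc N * 2 ^ k ≤ (j - k) * 2 ^ (2*j - k) * 2 ^ k :=
          Nat.mul_le_mul_right _ hNle
      _ = (j - k) * 2 ^ (2*j) := by
          rw [mul_assoc, ← pow_add]
          congr 2
          omega
      _ < j * 2 ^ (2*j) := by
          exact (Nat.mul_lt_mul_right (by positivity)).mpr (by omega)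
  have hL : N ^ j * (2 ^ (2*j)) ^ j * 2 ^ (k*j) = (N * 2 ^ k) ^ j * 2 ^ (2*j*j) := by
    rw [mul_pow]; ring
  have hR : j ^ j * 2 ^ (4*j*j) = (j * 2 ^ (2*j)) ^ j * 2 ^ (2*j*j) := by
    rw [mul_pow]; ring
  rw [hL, hR]
  exact (Nat.mul_lt_mul_right (by positivity)).mpr (Nat.pow_lt_pow_left hbase (by omega))
end

section
/- For every colouring g : [s]² → 2 built as follows — partition [s^t] into a complete s-ary tree of intervals of depths 0..t, and colour a pair (x,y) by g(a,b) where a < b are the indices of the distinct depth-(i) subintervals containing x and y inside their common depth-(i−1) interval — every set H ⊆ [s^t] homogeneous for the resulting colouring f satisfies: for each interval I of length s^i in the construction, |H ∩ I| < (2⌈log₂ s⌉)^i, provided g has no homogeneous set of size 2⌈log₂ s⌉. -/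
lemma find?_range_eq_some {p : ℕ → Bool} {n i : ℕ} (hi : i < n) (hp : p i = true)
    (h : ∀ j < i, p j = false) : (List.range n).find? p = some i := by
  have hn : n = i + (n - i) := by omega
  rw [hn, List.range_add, List.find?_append]
  have h1 : (List.range i).find? p = none := by
    rw [List.find?_eq_none]
    intro x hx
    simp only [List.mem_range] at hx
    simp [h x hx]
  have h2 : n - i = (n - i - 1) + 1 := by omega
  rw [h1, List.find?_map, h2]
  have : List.range (n - i - 1 + 1) = 0 :: List.range' 1 (n - i - 1) := by
    rw [List.range_eq_range']; rfl
  rw [this]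
  simp [List.find?, Function.comp, hp]

lemma splitLevel_eq {s t x y i : ℕ} (hit : i ≤ t) (heq : x / s ^ i = y / s ^ i)
    (hne : ∀ e < i, x / s ^ e ≠ y / s ^ e) : splitLevel s t x y = i := by
  unfold splitLevel
  rw [find?_range_eq_some (i := i) (by omega) (by simp [heq]) (fun j hj => by simp [hne j hj])]
  rfl

lemma hier_eq {s : ℕ} (t : ℕ) (hs : 2 ≤ s) (g : ℕ → ℕ → Bool) {x y i m a b : ℕ}
    (hi : 1 ≤ i) (hit : i ≤ t) (ha : a < s) (hb : b < s) (hab : a ≠ b)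
    (hx : x / s ^ (i - 1) = m * s + a) (hy : y / s ^ (i - 1) = m * s + b) :
    hierColor s t g x y = g a b := by
  have hsl : splitLevel s t x y = i := by
    apply splitLevel_eq hit
    · have hxi : x / s ^ i = m := by
        have : i = (i - 1) + 1 := by omega
        rw [this, pow_succ, ← Nat.div_div_eq_div_mul, hx, mul_comm m s,
          Nat.mul_add_div (by omega : 0 < s), Nat.div_eq_of_lt ha, Nat.add_zero]
      have hyi : y / s ^ i = m := by
        have : i = (i - 1) + 1 := by omega
        rw [this, pow_succ, ← Nat.div_div_eq_div_mul, hy, mul_comm m s,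
          Nat.mul_add_div (by omega : 0 < s), Nat.div_eq_of_lt hb, Nat.add_zero]
      rw [hxi, hyi]
    · intro e he hcon
      have he' : e ≤ i - 1 := by omega
      have : x / s ^ (i - 1) = y / s ^ (i - 1) := by
        have hd : i - 1 = e + (i - 1 - e) := by omega
        rw [hd, pow_add, ← Nat.div_div_eq_div_mul, ← Nat.div_div_eq_div_mul, hcon]
      rw [hx, hy] at this
      omega
  rw [hierColor, hsl, hx, hy]
  have hma : (m * s + a) % s = a := by
    rw [mul_comm m s, Nat.mul_add_mod]
    exact Nat.mod_eq_of_lt ha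
  have hmb : (m * s + b) % s = b := by
    rw [mul_comm m s, Nat.mul_add_mod]
    exact Nat.mod_eq_of_lt hb
  rw [hma, hmb]

lemma mem_Ico_div {s x q : ℕ} (hs : 0 < s) :
    x ∈ Finset.Ico (q * s) ((q + 1) * s) ↔ x / s = q := by
  simp only [Finset.mem_Ico]
  constructor
  · rintro ⟨h1, h2⟩; exact Nat.div_eq_of_lt_le h1 h2
  · intro h
    have hm := Nat.div_add_mod x s
    have hl := Nat.mod_lt x hs
    constructor
    · calc q * s = x / s * s := by rw [h]
        _ ≤ x := Nat.div_mul_le_self x s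
    · have : (q + 1) * s = s * (x / s) + s := by rw [h]; ring
      omega

theorem stmt14' : ∀ s t : ℕ, 2 ≤ s → ∀ g : ℕ → ℕ → Bool,
    (∀ G ⊆ Finset.range s, (∃ b, ∀ x ∈ G, ∀ y ∈ G, x < y → g x y = b) → G.card < 2 * Nat.clog 2 s) →
    ∀ H : Finset ℕ, H ⊆ Finset.range (s ^ t) → (∃ b, ∀ x ∈ H, ∀ y ∈ H, x < y → hierColor s t g x y = b) →
    ∀ i, 1 ≤ i → i ≤ t → ∀ q,
      (H ∩ Finset.Ico (q * s ^ i) ((q + 1) * s ^ i)).card < (2 * Nat.clog 2 s) ^ i := by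
  intro s t hs g hg H hH hhom
  obtain ⟨c, hc⟩ := hhom
  have hspos : 0 < s := by omega
  have hK : 2 ≤ 2 * Nat.clog 2 s := by
    have := Nat.clog_pos (by omega : 1 < 2) hs
    omega
  intro i hi
  induction i, hi using Nat.le_induction with
  | base =>
    intro h1t q
    simp only [pow_one]
    set B := H ∩ Finset.Ico (q * s) ((q + 1) * s) with hB
    have hBmem : ∀ x ∈ B, x / s = q := by
      intro x hx
      rw [hB, Finset.mem_inter] at hx
      exact (mem_Ico_div hspos).1 hx.2
    have hdecomp : ∀ x ∈ B, x = q * s + x % s := by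
      intro x hx
      have h1 : s * q + x % s = x := by
        conv_rhs => rw [← Nat.div_add_mod x s, hBmem x hx]
      rw [mul_comm]; exact h1.symm
    have hinj : Set.InjOn (· % s) B := by
      intro x hx y hy hxy
      have := hdecomp x hx
      have := hdecomp y hy
      simp only at hxy
      omega
    have hcard := Finset.card_image_of_injOn hinj
    have hsub : B.image (· % s) ⊆ Finset.range s := by
      intro a ha
      obtain ⟨x, _, rfl⟩ := Finset.mem_image.1 ha
      exact Finset.mem_range.2 (Nat.mod_lt x hspos)
    have hhomG : ∀ a ∈ B.image (· % s), ∀ b ∈ B.image (· % s), a < b → g a b = c := by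
      intro a ha b hb hab
      obtain ⟨x, hx, rfl⟩ := Finset.mem_image.1 ha
      obtain ⟨y, hy, rfl⟩ := Finset.mem_image.1 hb
      have hxd := hdecomp x hx
      have hyd := hdecomp y hy
      have hxy : x < y := by omega
      have hx' : x / s ^ (1 - 1) = q * s + x % s := by simpa using hxd
      have hy' : y / s ^ (1 - 1) = q * s + y % s := by simpa using hyd
      have := hier_eq t hs g le_rfl h1t (Nat.mod_lt x hspos) (Nat.mod_lt y hspos)
        (by omega) hx' hy'
      rw [← this]
      exact hc x (Finset.mem_of_mem_inter_left hx) y (Finset.mem_of_mem_inter_left hy) hxy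
    calc B.card = (B.image (· % s)).card := hcard.symm
      _ < 2 * Nat.clog 2 s := hg _ hsub ⟨c, hhomG⟩
  | succ i hi ih =>
    intro hit q
    have hit' : i ≤ t := by omega
    have hpow : 0 < s ^ i := pow_pos hspos i
    set K := 2 * Nat.clog 2 s with hKdef
    set J : ℕ → Finset ℕ :=
      fun a => H ∩ Finset.Ico ((q * s + a) * s ^ i) ((q * s + a + 1) * s ^ i) with hJ
    have hJdiv : ∀ a, ∀ x ∈ J a, x ∈ H ∧ x / s ^ i = q * s + a := by
      intro a x hx
      rw [hJ, Finset.mem_inter] at hx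
      exact ⟨hx.1, (mem_Ico_div hpow).1 hx.2⟩
    have hunion : H ∩ Finset.Ico (q * s ^ (i + 1)) ((q + 1) * s ^ (i + 1))
        = (Finset.range s).biUnion J := by
      ext x
      simp only [Finset.mem_inter, Finset.mem_biUnion, Finset.mem_range, hJ]
      constructor
      · rintro ⟨hxH, hxI⟩
        have hx1 : x / s ^ (i + 1) = q := (mem_Ico_div (pow_pos hspos (i + 1))).1 hxI
        refine ⟨x / s ^ i % s, Nat.mod_lt _ hspos, hxH, (mem_Ico_div hpow).2 ?_⟩
        have hdd : x / s ^ i / s = q := by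
          rw [Nat.div_div_eq_div_mul, ← pow_succ]; exact hx1
        have h2 := Nat.div_add_mod (x / s ^ i) s
        calc x / s ^ i = s * (x / s ^ i / s) + x / s ^ i % s := h2.symm
          _ = q * s + x / s ^ i % s := by rw [hdd, mul_comm]
      · rintro ⟨a, ha, hxH, hxJ⟩
        have hd := (mem_Ico_div hpow).1 hxJ
        refine ⟨hxH, (mem_Ico_div (pow_pos hspos (i + 1))).2 ?_⟩
        rw [pow_succ, ← Nat.div_div_eq_div_mul, hd, mul_comm q s,
          Nat.mul_add_div hspos, Nat.div_eq_of_lt ha, Nat.add_zero]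
    have hdisj : ∀ a ∈ Finset.range s, ∀ b ∈ Finset.range s, a ≠ b → Disjoint (J a) (J b) := by
      intro a _ b _ hab
      rw [Finset.disjoint_left]
      intro x hxa hxb
      have h1 := (hJdiv a x hxa).2
      have h2 := (hJdiv b x hxb).2
      omega
    set A := (Finset.range s).filter (fun a => (J a).Nonempty) with hA
    have hsum : (H ∩ Finset.Ico (q * s ^ (i + 1)) ((q + 1) * s ^ (i + 1))).card
        = ∑ a ∈ A, (J a).card := by
      rw [hunion, Finset.card_biUnion hdisj]
      refine (Finset.sum_subset (Finset.filter_subset _ _) ?_).symm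
      intro a haR hna
      have hne : ¬ (J a).Nonempty := fun h => hna (Finset.mem_filter.2 ⟨haR, h⟩)
      rw [Finset.card_eq_zero.2 (Finset.not_nonempty_iff_eq_empty.1 hne)]
    have hAsub : A ⊆ Finset.range s := Finset.filter_subset _ _
    have hAhom : ∀ a ∈ A, ∀ b ∈ A, a < b → g a b = c := by
      intro a ha b hb hab
      rw [hA, Finset.mem_filter, Finset.mem_range] at ha hb
      obtain ⟨has, x, hx⟩ := ha
      obtain ⟨hbs, y, hy⟩ := hb
      obtain ⟨hxH, hxd⟩ := hJdiv a x hx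
      obtain ⟨hyH, hyd⟩ := hJdiv b y hy
      rw [hJ, Finset.mem_inter, Finset.mem_Ico] at hx hy
      have hxy : x < y := by
        calc x < (q * s + a + 1) * s ^ i := hx.2.2
          _ ≤ (q * s + b) * s ^ i := Nat.mul_le_mul_right _ (by omega)
          _ ≤ y := hy.2.1
      have hx' : x / s ^ (i + 1 - 1) = q * s + a := by simpa using hxd
      have hy' : y / s ^ (i + 1 - 1) = q * s + b := by simpa using hyd
      have := hier_eq t hs g (by omega : 1 ≤ i + 1) hit has hbs (by omega) hx' hy'
      rw [← this]
      exact hc x hxH y hyH hxy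
    have hAcard : A.card ≤ K - 1 := Nat.le_pred_of_lt (hg A hAsub ⟨c, hAhom⟩)
    have hJcard : ∀ a ∈ A, (J a).card ≤ K ^ i - 1 := by
      intro a _
      exact Nat.le_pred_of_lt (ih hit' (q * s + a))
    calc (H ∩ Finset.Ico (q * s ^ (i + 1)) ((q + 1) * s ^ (i + 1))).card
        = ∑ a ∈ A, (J a).card := hsum
      _ ≤ A.card * (K ^ i - 1) := by
          simpa using Finset.sum_le_card_nsmul A _ (K ^ i - 1) hJcard
      _ ≤ (K - 1) * (K ^ i - 1) := Nat.mul_le_mul_right _ hAcard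
      _ ≤ (K - 1) * K ^ i := Nat.mul_le_mul_left _ (Nat.sub_le _ _)
      _ < K * K ^ i := by
          have h2 : 0 < K ^ i := pow_pos (by omega) i
          exact (Nat.mul_lt_mul_right h2).2 (by omega)
      _ = K ^ (i + 1) := by rw [pow_succ, mul_comm]

theorem stmt14 : ∀ s t : ℕ, 2 ≤ s → ∀ g : ℕ → ℕ → Bool,
    (∀ G ⊆ Finset.range s, Homogeneous g G → G.card < 2 * Nat.clog 2 s) →
    ∀ H ⊆ Finset.range (s ^ t), Homogeneous (hierColor s t g) H →
    ∀ i, 1 ≤ i → i ≤ t → ∀ q,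
      (H ∩ Finset.Ico (q * s ^ i) ((q + 1) * s ^ i)).card < (2 * Nat.clog 2 s) ^ i := by
  exact stmt14'
end

section
/- In the hierarchical colouring of [s^t] built from a base colouring g on [s] (pairs coloured by g applied to the indices of the subintervals separating them at the first level where they split), every element x ∈ [s^t] has the property that the sequence ⟨f(x,y) : y > x⟩ consists of at most s·t maximal constant blocks; i.e., f is at most st-unstable. -/
lemma find?_range_min (p : ℕ → Bool) : ∀ (n a : ℕ),
    (List.range n).find? p = some a → p a = true ∧ ∀ b < a, p b = false := by
  intro n
  induction n with
  | zero => intro a h; simp [List.range_zero] at h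
  | succ n ih =>
    intro a h
    rw [List.range_succ, List.find?_append] at h
    cases hf : (List.range n).find? p with
    | some a' =>
      rw [hf] at h
      rw [show (some a').or (List.find? p [n]) = some a' from rfl] at h
      have hea : a' = a := by injection h
      subst hea
      exact ih _ hf
    | none =>
      rw [hf] at h
      simp only [Option.none_or] at h
      have hfn := List.find?_eq_none.mp hf
      rw [List.find?_cons] at h
      cases hp : p n with
      | true =>
        rw [hp] at h
        simp at h
        subst h
        exact ⟨hp, fun b hb => Bool.eq_false_iff.mpr (hfn b (List.mem_range.mpr hb))⟩
      | false => rw [hp] at h; simp at h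

lemma changes_cons (a b : Bool) (l : List Bool) :
    changes (a :: b :: l) = (if a != b then 1 else 0) + changes (b :: l) := by
  simp [changes, List.filter_cons]
  cases a <;> cases b <;> simp [Nat.add_comm]

lemma changes_le (h : ℕ → Bool) : ∀ (l : List ℕ) (a : ℕ),
    (a :: l).Chain' (· ≤ ·) →
    changes ((a :: l).map h) + a ≤ l.getLastD a := by
  intro l
  induction l with
  | nil => intro a _; simp [changes]
  | cons b r ih =>
    intro a hc
    have hab : a ≤ b := (List.isChain_cons_cons.mp hc).1
    have hrc : (b :: r).Chain' (· ≤ ·) := (List.isChain_cons_cons.mp hc).2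
    have h2 := ih b hrc
    simp only [List.map_cons] at h2 ⊢
    rw [List.getLastD_cons, changes_cons]
    by_cases hne : (h a != h b) = true
    · have : a ≠ b := by rintro rfl; simp at hne
      have : a + 1 ≤ b := Nat.lt_of_le_of_ne hab this
      rw [if_pos hne]
      omega
    · rw [if_neg hne]
      omega

lemma blocks_map_le (h : ℕ → Bool) (l : List ℕ) (K : ℕ)
    (hc : l.Chain' (· ≤ ·)) (hK : ∀ a ∈ l, a < K) : blocks (l.map h) ≤ K := by
  cases l with
  | nil => simp [blocks]
  | cons a r =>
    have h1 := changes_le h r a hc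
    have h2 : r.getLastD a < K := hK _ (List.getLastD_mem_cons (l := r) (a := a))
    unfold blocks
    rw [if_neg (by simp)]
    simp only [List.map_cons] at h1 ⊢
    omega

lemma splitLevel_spec (s t x y : ℕ) (hs : 0 < s) (hx : x < s ^ t) (hy : y < s ^ t)
    (hne : x ≠ y) :
    0 < splitLevel s t x y ∧ splitLevel s t x y ≤ t ∧
    x / s ^ (splitLevel s t x y) = y / s ^ (splitLevel s t x y) ∧
    ∀ e < splitLevel s t x y, x / s ^ e ≠ y / s ^ e := by
  set p : ℕ → Bool := fun e => x / s ^ e == y / s ^ e with hp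
  have hpt : p t = true := by
    simp [hp, Nat.div_eq_of_lt hx, Nat.div_eq_of_lt hy]
  have hnn : (List.range (t + 1)).find? p ≠ none := by
    intro h
    exact absurd hpt (by simpa using List.find?_eq_none.mp h t (List.mem_range.mpr (by omega)))
  obtain ⟨a, ha⟩ := Option.ne_none_iff_exists'.mp hnn
  have hsl : splitLevel s t x y = a := by show ((List.range (t + 1)).find? p).getD t = a; rw [ha]; rfl
  obtain ⟨hpa, hmin⟩ := find?_range_min p _ a ha
  have hmem : a ∈ List.range (t + 1) := List.mem_of_find?_eq_some ha
  have hat : a ≤ t := by have := List.mem_range.mp hmem; omega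
  have hpos : 0 < a := by
    rcases Nat.eq_zero_or_pos a with h0 | h0
    · exfalso; rw [h0] at hpa; simp [hp] at hpa; exact hne hpa
    · exact h0
  rw [hsl]
  refine ⟨hpos, hat, by simpa [hp] using hpa, fun e he => ?_⟩
  have := hmin e he
  simpa [hp] using this

theorem stmt15 : ∀ s t : ℕ, 2 ≤ s → ∀ g : ℕ → ℕ → Bool,
    AtMostUnstable (hierColor s t g) (Finset.range (s ^ t)) (s * t) := by
  intro s t hs g x hx
  have hs0 : 0 < s := by omega
  have hxlt : x < s ^ t := Finset.mem_range.mp hx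
  set φ : ℕ → ℕ := fun y =>
      (splitLevel s t x y - 1) * s + (y / s ^ (splitLevel s t x y - 1)) % s with hφ
  set h : ℕ → Bool := fun n => g ((x / s ^ (n / s)) % s) (n % s) with hh
  set m : List ℕ := Finset.sort
      ((Finset.range (s ^ t)).filter fun y => x < y) (· ≤ ·) with hm
  have hmem : ∀ y ∈ m, x < y ∧ y < s ^ t := by
    intro y hy
    rw [hm, Finset.mem_sort, Finset.mem_filter, Finset.mem_range] at hy
    exact ⟨hy.2, hy.1⟩
  -- pointwise : f x y = h (φ y)
  have hfh : ∀ y, hierColor s t g x y = h (φ y) := by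
    intro y
    have hd : (y / s ^ (splitLevel s t x y - 1)) % s < s := Nat.mod_lt _ hs0
    have h1 : φ y / s = splitLevel s t x y - 1 := by
      rw [hφ]; simp only
      rw [Nat.mul_comm, Nat.mul_add_div hs0, Nat.div_eq_of_lt hd]
      omega
    have h2 : φ y % s = (y / s ^ (splitLevel s t x y - 1)) % s := by
      rw [hφ]; simp only
      rw [Nat.mul_comm, Nat.mul_add_mod]
      exact Nat.mod_mod_of_dvd _ dvd_rfl
    rw [hh]; simp only
    rw [h1, h2, hierColor]
  -- φ is monotone on elements of m
  have hmono : ∀ y₁ y₂, x < y₁ → y₁ < s ^ t → x < y₂ → y₂ < s ^ t → y₁ < y₂ →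
      φ y₁ ≤ φ y₂ := by
    intro y₁ y₂ hy1 hy1t hy2 hy2t hlt
    obtain ⟨he1pos, he1t, he1eq, he1min⟩ :=
      splitLevel_spec s t x y₁ hs0 hxlt hy1t (by omega)
    obtain ⟨he2pos, he2t, he2eq, he2min⟩ :=
      splitLevel_spec s t x y₂ hs0 hxlt hy2t (by omega)
    set e₁ := splitLevel s t x y₁ with hE1
    set e₂ := splitLevel s t x y₂ with hE2
    have hEle : e₁ ≤ e₂ := by
      by_contra hcon
      push_neg at hcon
      refine he1min e₂ hcon ?_
      have ha : x / s ^ e₂ ≤ y₁ / s ^ e₂ := Nat.div_le_div_right (by omega)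
      have hb : y₁ / s ^ e₂ ≤ y₂ / s ^ e₂ := Nat.div_le_div_right (by omega)
      omega
    rw [hφ]; simp only [← hE1, ← hE2]
    rcases Nat.lt_or_ge e₁ e₂ with hltE | hgeE
    · have hd : (y₁ / s ^ (e₁ - 1)) % s < s := Nat.mod_lt _ hs0
      have hkey : (e₁ - 1) * s + s ≤ (e₂ - 1) * s := by
        calc (e₁ - 1) * s + s = (e₁ - 1 + 1) * s := by ring
        _ = e₁ * s := by congr 1; omega
        _ ≤ (e₂ - 1) * s := Nat.mul_le_mul_right _ (by omega)
      omega
    · have heq : e₁ = e₂ := le_antisymm hEle hgeE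
      rw [heq]
      have hse : s ^ e₂ = s ^ (e₂ - 1) * s := by
        conv_lhs => rw [show e₂ = (e₂ - 1) + 1 by omega]
        rw [pow_succ]
      have hq : (y₁ / s ^ (e₂ - 1)) / s = (y₂ / s ^ (e₂ - 1)) / s := by
        rw [Nat.div_div_eq_div_mul, Nat.div_div_eq_div_mul, ← hse]
        rw [heq] at he1eq
        rw [← he1eq, he2eq]
      have hle : y₁ / s ^ (e₂ - 1) ≤ y₂ / s ^ (e₂ - 1) := Nat.div_le_div_right (by omega)
      have hmod : (y₁ / s ^ (e₂ - 1)) % s ≤ (y₂ / s ^ (e₂ - 1)) % s := by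
        have e1 := Nat.mod_add_div (y₁ / s ^ (e₂ - 1)) s
        have e2 := Nat.mod_add_div (y₂ / s ^ (e₂ - 1)) s
        rw [hq] at e1
        omega
      exact Nat.add_le_add_left hmod _
  -- φ bounded
  have hbound : ∀ y, x < y → y < s ^ t → φ y < s * t := by
    intro y hy hyt
    obtain ⟨hepos, het, _, _⟩ := splitLevel_spec s t x y hs0 hxlt hyt (by omega)
    have hd : (y / s ^ (splitLevel s t x y - 1)) % s < s := Nat.mod_lt _ hs0
    have hub : (splitLevel s t x y - 1) * s ≤ (t - 1) * s :=
      Nat.mul_le_mul_right _ (by omega)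
    have ht1 : (t - 1) * s + s = t * s := by
      have htt : t - 1 + 1 = t := by omega
      calc (t - 1) * s + s = (t - 1 + 1) * s := by ring
      _ = t * s := by rw [htt]
    rw [hφ]; simp only
    rw [Nat.mul_comm s t]
    omega
  -- assemble
  have hseq : seqAfter (hierColor s t g) (Finset.range (s ^ t)) x = (m.map φ).map h := by
    rw [seqAfter, ← hm, List.map_map]
    exact List.map_congr_left fun y _ => hfh y
  rw [hseq]
  apply blocks_map_le
  · show List.IsChain _ _
    rw [List.isChain_map]
    have hsorted : m.Pairwise (· < ·) := (Finset.sortedLT_sort _).pairwise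
    refine List.Pairwise.isChain (List.Pairwise.imp_of_mem ?_ hsorted)
    intro a b ha hb hab
    obtain ⟨ha1, ha2⟩ := hmem a ha
    obtain ⟨hb1, hb2⟩ := hmem b hb
    exact hmono a b ha1 ha2 hb1 hb2 hab
  · intro a ha
    rw [List.mem_map] at ha
    obtain ⟨y, hy, rfl⟩ := ha
    obtain ⟨h1, h2⟩ := hmem y hy
    exact hbound y h1 h2
end
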